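/- arXiv:2401.11251 — 2 statements merged into one kernel-verified Lean document; each statement's English description precedes it below -/
import Mathlib

section
/- Let N=(N_p)_{p∈ℕ_0} ∈ LC with quotient sequence ν_p:=N_p/N_{p−1} (p≥1), and assume there exists Q∈ℕ, Q≥2, such that liminf_{j→∞} ν_{Qj}/ν_j > 1 and sup_{j≥1} ν_{2j}/ν_j < ∞. Then there exists a sequence M=(M_p)_{p∈ℕ_0} ∈ LC with quotients μ_p:=M_p/M_{p−1} such that: (a) M satisfies moderate growth (M2); (b) 1 < liminf_{j→∞} μ_{Qj}/μ_j ≤ limsup_{j→∞} μ_{Qj}/μ_j < ∞; (c) liminf_{p→∞} μ_p/ν_p = 0 and limsup_{p→∞} μ_p/ν_p = +∞; (d) liminf_{p→∞} (M_p/N_p)^{1/p} = 0 and limsup_{p→∞} (M_p/N_p)^{1/p} = +∞. In particular, neither M⪯N nor N⪯M holds, i.e. M oscillates around N. -/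
open Filter Asymptotics

noncomputable section

/-- Partial derivative operator in coordinate `i`. -/
def pderivOp {d : ℕ} (i : Fin d) (f : (Fin d → ℝ) → ℝ) : (Fin d → ℝ) → ℝ :=
  fun x => fderiv ℝ f x (Pi.single i 1)

/-- Iterated partial derivative `∂^β f` for a multi-index `β`. -/
def mderiv {d : ℕ} (β : Fin d → ℕ) (f : (Fin d → ℝ) → ℝ) : (Fin d → ℝ) → ℝ :=
  (List.finRange d).foldr (fun i g => (pderivOp i)^[β i] g) f

/-- The monomial `x^α` for a multi-index `α`. -/
def mpow {d : ℕ} (x : Fin d → ℝ) (α : Fin d → ℕ) : ℝ := ∏ i, x i ^ α i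

/-- The length `|α| = α 0 + ⋯ + α (d-1)` of a multi-index. -/
def msize {d : ℕ} (α : Fin d → ℕ) : ℕ := ∑ i, α i

/-- Young conjugate `φ*_ω(s) = sup_{t ≥ 0} (s·t − ω(e^t))`. -/
def youngConj (ω : ℝ → ℝ) (s : ℝ) : ℝ :=
  sSup {y : ℝ | ∃ t : ℝ, 0 ≤ t ∧ y = s * t - ω (Real.exp t)}

/-- A general weight function: continuous, increasing, `ω:[0,∞)→[0,∞)`, with
conditions (α), (γ), (δ) (condition (β) is not required). -/
structure IsGenWeightFun (ω : ℝ → ℝ) : Prop where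
  nonneg : ∀ t, 0 ≤ t → 0 ≤ ω t
  continuous : ContinuousOn ω (Set.Ici 0)
  mono : MonotoneOn ω (Set.Ici 0)
  alpha : ∃ L : ℝ, 1 ≤ L ∧ ∀ t, 0 ≤ t → ω (2 * t) ≤ L * (ω t + 1)
  gamma : Real.log =o[Filter.atTop] ω
  delta : ConvexOn ℝ (Set.Ici 0) fun t => ω (Real.exp t)

/-- A weight function: a general weight function which moreover satisfies
(β): `ω(t) = O(t²)` as `t → ∞`. -/
structure IsWeightFun (ω : ℝ → ℝ) extends IsGenWeightFun ω : Prop where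
  beta : ω =O[Filter.atTop] fun t : ℝ => t ^ 2

/-- The weight `exp((1/l)·φ*_ω(l·k))`. -/
def wWeight (ω : ℝ → ℝ) (l : ℝ) (k : ℕ) : ℝ :=
  Real.exp (1 / l * youngConj ω (l * (k : ℝ)))

/-- Roumieu Gelfand–Shilov class `S_{{ω}}(ℝ^d)`. -/
def SRoumieuW (ω : ℝ → ℝ) (d : ℕ) : Set ((Fin d → ℝ) → ℝ) :=
  {f | ContDiff ℝ (⊤ : ℕ∞) f ∧ ∃ l > 0, ∃ C > 0, ∀ α β : Fin d → ℕ, ∀ x : Fin d → ℝ,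
    |mpow x α * mderiv β f x| ≤ C * wWeight ω l (msize α + msize β)}

/-- Beurling Gelfand–Shilov class `S_{(ω)}(ℝ^d)`. -/
def SBeurlingW (ω : ℝ → ℝ) (d : ℕ) : Set ((Fin d → ℝ) → ℝ) :=
  {f | ContDiff ℝ (⊤ : ℕ∞) f ∧ ∀ l > 0, ∃ C > 0, ∀ α β : Fin d → ℕ, ∀ x : Fin d → ℝ,
    |mpow x α * mderiv β f x| ≤ C * wWeight ω l (msize α + msize β)}

/-- Continuity of the inclusion `S_(ω)(ℝ^d) ⊆ S_(σ)(ℝ^d)`: for every `μ > 0` there are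
`ν > 0` and `C ≥ 1` with `q_{σ,μ}(f) ≤ C · q_{ω,ν}(f)` for all `f ∈ S_(ω)(ℝ^d)`,
expressed via bounding constants. -/
def contIncBW (ω σ : ℝ → ℝ) (d : ℕ) : Prop :=
  ∀ μ > 0, ∃ ν > 0, ∃ C : ℝ, 1 ≤ C ∧ ∀ f ∈ SBeurlingW ω d, ∀ D : ℝ, 0 ≤ D →
    (∀ α β : Fin d → ℕ, ∀ x : Fin d → ℝ,
      |mpow x α * mderiv β f x| ≤ D * wWeight ω ν (msize α + msize β)) →
    (∀ α β : Fin d → ℕ, ∀ x : Fin d → ℝ,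
      |mpow x α * mderiv β f x| ≤ C * D * wWeight σ μ (msize α + msize β))

/-- `M ∈ LC`: normalized, log-convex, with `M_p^{1/p} → ∞`. -/
structure IsLC (M : ℕ → ℝ) : Prop where
  pos : ∀ p, 0 < M p
  norm0 : M 0 = 1
  norm1 : 1 ≤ M 1
  logConvex : ∀ p : ℕ, M (p + 1) ^ 2 ≤ M p * M (p + 2)
  root_tendsto : Filter.Tendsto (fun p : ℕ => M p ^ (1 / (p : ℝ))) Filter.atTop Filter.atTop

/-- `M ⪯ N`: `∃ C ≥ 1, ∀ p, M_p ≤ C^p N_p`. -/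
def seqPreceq (M N : ℕ → ℝ) : Prop := ∃ C : ℝ, 1 ≤ C ∧ ∀ p : ℕ, M p ≤ C ^ p * N p

/-- `M ◁ N`: `(M_p/N_p)^{1/p} → 0`. -/
def seqLtriangle (M N : ℕ → ℝ) : Prop :=
  Filter.Tendsto (fun p : ℕ => (M p / N p) ^ (1 / (p : ℝ))) Filter.atTop (nhds 0)

/-- `‖f‖_{∞,M,h} ≤ C`, expressed pointwise. -/
def seqBound {d : ℕ} (M : ℕ → ℝ) (h C : ℝ) (f : (Fin d → ℝ) → ℝ) : Prop :=
  ∀ α β : Fin d → ℕ, ∀ x : Fin d → ℝ,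
    |mpow x α * mderiv β f x| ≤ C * h ^ (msize α + msize β) * M (msize α + msize β)

/-- Roumieu class `S_{{M}}(ℝ^d)` for a single weight sequence. -/
def SRoumieuSeq (M : ℕ → ℝ) (d : ℕ) : Set ((Fin d → ℝ) → ℝ) :=
  {f | ContDiff ℝ (⊤ : ℕ∞) f ∧ ∃ C > 0, ∃ h > 0, seqBound M h C f}

/-- Beurling class `S_(M)(ℝ^d)` for a single weight sequence. -/
def SBeurlingSeq (M : ℕ → ℝ) (d : ℕ) : Set ((Fin d → ℝ) → ℝ) :=
  {f | ContDiff ℝ (⊤ : ℕ∞) f ∧ ∀ h > 0, ∃ C > 0, seqBound M h C f}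

/-- Moderate growth (M2). -/
def condM2 (M : ℕ → ℝ) : Prop := ∃ C : ℝ, 1 ≤ C ∧ ∀ p q : ℕ, M (p + q) ≤ C ^ (p + q) * M p * M q

/-- Derivation closedness (M2'). -/
def condM2' (M : ℕ → ℝ) : Prop := ∃ D : ℝ, 1 ≤ D ∧ ∀ p : ℕ, M (p + 1) ≤ D ^ (p + 1) * M p

/-- Condition (12L2R) for a single sequence. -/
def cond12L2Rseq (M : ℕ → ℝ) : Prop :=
  ∃ B > 0, ∃ C > 0, ∃ H > 0, ∀ p q : ℕ,
    (p : ℝ) ^ ((p : ℝ) / 2) * M q ≤ B * C ^ p * H ^ (p + q) * M (p + q)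

/-- Condition (12L2B) for a single sequence. -/
def cond12L2Bseq (M : ℕ → ℝ) : Prop :=
  ∃ H > 0, ∀ C > 0, ∃ B > 0, ∀ p q : ℕ,
    (p : ℝ) ^ ((p : ℝ) / 2) * M q ≤ B * C ^ p * H ^ (p + q) * M (p + q)

/-- Non-quasianalyticity of a weight sequence: `∑ M_{p-1}/M_p < ∞`. -/
def nonQA (M : ℕ → ℝ) : Prop := Summable fun p : ℕ => M p / M (p + 1)

/-- Continuity of the inclusion `S_(M)(ℝ^d) ⊆ S_(N)(ℝ^d)` for single sequences. -/
def contIncBSeq (M N : ℕ → ℝ) (d : ℕ) : Prop :=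
  ∀ h > 0, ∃ h' > 0, ∃ C : ℝ, 1 ≤ C ∧ ∀ f ∈ SBeurlingSeq M d, ∀ D : ℝ, 0 ≤ D →
    seqBound M h' D f → seqBound N h (C * D) f

/-- A weight matrix: positive normalized sequences, pointwise nondecreasing in the index. -/
def IsWeightMatrix (M : ℝ → ℕ → ℝ) : Prop :=
  (∀ l, 0 < l → (∀ p, 0 < M l p) ∧ M l 0 = 1) ∧
    ∀ l k, 0 < l → l ≤ k → ∀ p, M l p ≤ M k p

/-- Standard log-convexity of a weight matrix. -/
def StdLogConvex (M : ℝ → ℕ → ℝ) : Prop := ∀ l, 0 < l → IsLC (M l)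

/-- Roumieu class `S_{{𝓜}}(ℝ^d)` for a weight matrix. -/
def SRoumieuMat (M : ℝ → ℕ → ℝ) (d : ℕ) : Set ((Fin d → ℝ) → ℝ) :=
  {f | ∃ l > 0, f ∈ SRoumieuSeq (M l) d}

/-- Beurling class `S_(𝓜)(ℝ^d)` for a weight matrix. -/
def SBeurlingMat (M : ℝ → ℕ → ℝ) (d : ℕ) : Set ((Fin d → ℝ) → ℝ) :=
  {f | ∀ l > 0, f ∈ SBeurlingSeq (M l) d}

/-- `𝓜{⪯}𝓝`. -/
def matPreceqR (M N : ℝ → ℕ → ℝ) : Prop := ∀ l > 0, ∃ k > 0, seqPreceq (M l) (N k)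

/-- `𝓜(⪯)𝓝`. -/
def matPreceqB (M N : ℝ → ℕ → ℝ) : Prop := ∀ l > 0, ∃ k > 0, seqPreceq (M k) (N l)

/-- `𝓜 ◁ 𝓝`. -/
def matLtriangle (M N : ℝ → ℕ → ℝ) : Prop := ∀ l > 0, ∀ k > 0, seqLtriangle (M l) (N k)

/-- Condition (12L2R) for a weight matrix (Roumieu). -/
def cond12L2RMat (M : ℝ → ℕ → ℝ) : Prop :=
  ∀ l > 0, ∃ k, l ≤ k ∧ ∃ B > 0, ∃ C > 0, ∃ H > 0, ∀ p q : ℕ,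
    (p : ℝ) ^ ((p : ℝ) / 2) * M l q ≤ B * C ^ p * H ^ (p + q) * M k (p + q)

/-- Condition (M2')_R for a weight matrix (Roumieu). -/
def condM2'RMat (M : ℝ → ℕ → ℝ) : Prop :=
  ∀ l > 0, ∃ k, l ≤ k ∧ ∃ A : ℝ, 1 ≤ A ∧ ∀ p : ℕ, M l (p + 1) ≤ A ^ (p + 1) * M k p

/-- Condition (12L2B) for a weight matrix (Beurling). -/
def cond12L2BMat (M : ℝ → ℕ → ℝ) : Prop :=
  ∀ l > 0, ∃ k, 0 < k ∧ k ≤ l ∧ ∃ H > 0, ∀ C > 0, ∃ B > 0, ∀ p q : ℕ,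
    (p : ℝ) ^ ((p : ℝ) / 2) * M k q ≤ B * C ^ p * H ^ (p + q) * M l (p + q)

/-- Condition (M2')_B for a weight matrix (Beurling). -/
def condM2'BMat (M : ℝ → ℕ → ℝ) : Prop :=
  ∀ l > 0, ∃ k, 0 < k ∧ k ≤ l ∧ ∃ A : ℝ, 1 ≤ A ∧ ∀ p : ℕ, M k (p + 1) ≤ A ^ (p + 1) * M l p

/-- Continuity of the inclusion `S_(𝓜)(ℝ^d) ⊆ S_(𝓝)(ℝ^d)` for weight matrices. -/
def contIncBMat (M N : ℝ → ℕ → ℝ) (d : ℕ) : Prop :=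
  ∀ l > 0, ∀ h > 0, ∃ k > 0, ∃ h' > 0, ∃ C : ℝ, 1 ≤ C ∧
    ∀ f ∈ SBeurlingMat M d, ∀ D : ℝ, 0 ≤ D →
      seqBound (M k) h' D f → seqBound (N l) h (C * D) f

/-- Associated function `ω_M(t) = sup_p log(t^p / M_p)`. -/
def assocFun (M : ℕ → ℝ) (t : ℝ) : ℝ :=
  sSup {y : ℝ | ∃ p : ℕ, y = Real.log (t ^ p / M p)}

/-- Condition (α) for a function. -/
def condAlpha (ω : ℝ → ℝ) : Prop := ∃ L : ℝ, 1 ≤ L ∧ ∀ t, 0 ≤ t → ω (2 * t) ≤ L * (ω t + 1)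

/-- Condition (ω6): `∃ H ≥ 1, ∀ t ≥ 0, 2ω(t) ≤ ω(Ht) + H`. -/
def condOmega6 (ω : ℝ → ℝ) : Prop := ∃ H : ℝ, 1 ≤ H ∧ ∀ t, 0 ≤ t → 2 * ω t ≤ ω (H * t) + H

/-- The sequence `W^{(λ)}_p = exp((1/λ)φ*_ω(λ p))`. -/
def wSeq (ω : ℝ → ℝ) (l : ℝ) (p : ℕ) : ℝ := Real.exp (1 / l * youngConj ω (l * (p : ℝ)))

end

noncomputable section

def oscT (σ : ℕ) : ℝ := (σ / 2 : ℕ) + 1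

lemma oscT_ge_one (σ : ℕ) : 1 ≤ oscT σ := by
  have : (0:ℝ) ≤ ((σ / 2 : ℕ) : ℝ) := Nat.cast_nonneg _
  unfold oscT; linarith

noncomputable def oscStep (ℓ : ℕ → ℝ) (n : ℕ) (s : ℝ × ℝ × ℕ) : ℝ × ℝ × ℕ :=
  let δ := ℓ (n+2) - ℓ (n+1)
  let e' := if Even s.2.2 then s.1 - δ/2 else s.1 + δ
  let S' := s.2.1 + e'
  ⟨e', S',
    if (Even s.2.2 ∧ e' ≤ -(oscT s.2.2) ∧ S' ≤ -(oscT s.2.2) * ((n:ℝ)+2)) ∨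
       (¬ Even s.2.2 ∧ oscT s.2.2 ≤ e' ∧ oscT s.2.2 * ((n:ℝ)+2) ≤ S')
    then s.2.2 + 1 else s.2.2⟩

noncomputable def oscState (ℓ : ℕ → ℝ) : ℕ → ℝ × ℝ × ℕ
  | 0 => (0, 0, 0)
  | n+1 => oscStep ℓ n (oscState ℓ n)

namespace oscState

variable (ℓ : ℕ → ℝ)

lemma zero_def : oscState ℓ 0 = (0,0,0) := rfl

lemma snd_succ (n : ℕ) :
    (oscState ℓ (n+1)).2.1 = (oscState ℓ n).2.1 + (oscState ℓ (n+1)).1 := rfl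

lemma fst_even {n : ℕ} (h : Even (oscState ℓ n).2.2) :
    (oscState ℓ (n+1)).1 = (oscState ℓ n).1 - (ℓ (n+2) - ℓ (n+1))/2 := by
  show (oscStep ℓ n (oscState ℓ n)).1 = _
  simp [oscStep, h]

lemma fst_odd {n : ℕ} (h : ¬ Even (oscState ℓ n).2.2) :
    (oscState ℓ (n+1)).1 = (oscState ℓ n).1 + (ℓ (n+2) - ℓ (n+1)) := by
  show (oscStep ℓ n (oscState ℓ n)).1 = _
  simp [oscStep, h]

lemma sigma_def (n : ℕ) :
    (oscState ℓ (n+1)).2.2 =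
      if (Even (oscState ℓ n).2.2 ∧ (oscState ℓ (n+1)).1 ≤ -(oscT (oscState ℓ n).2.2) ∧
            (oscState ℓ (n+1)).2.1 ≤ -(oscT (oscState ℓ n).2.2) * ((n:ℝ)+2)) ∨
         (¬ Even (oscState ℓ n).2.2 ∧ oscT (oscState ℓ n).2.2 ≤ (oscState ℓ (n+1)).1 ∧
            oscT (oscState ℓ n).2.2 * ((n:ℝ)+2) ≤ (oscState ℓ (n+1)).2.1)
      then (oscState ℓ n).2.2 + 1 else (oscState ℓ n).2.2 := rfl

variable {ℓ}
variable (hm : ∀ n : ℕ, 1 ≤ n → ℓ n ≤ ℓ (n+1))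

section withmono
include hm

lemma delta_nonneg (n : ℕ) : 0 ≤ ℓ (n+2) - ℓ (n+1) := by
  have := hm (n+1) (by omega); linarith

lemma fst_step_lower (n : ℕ) :
    (oscState ℓ n).1 - (ℓ (n+2) - ℓ (n+1))/2 ≤ (oscState ℓ (n+1)).1 := by
  have hδ := delta_nonneg hm n
  by_cases h : Even (oscState ℓ n).2.2
  · rw [fst_even ℓ h]
  · rw [fst_odd ℓ h]; linarith

lemma fst_step_upper (n : ℕ) :
    (oscState ℓ (n+1)).1 ≤ (oscState ℓ n).1 + (ℓ (n+2) - ℓ (n+1)) := by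
  have hδ := delta_nonneg hm n
  by_cases h : Even (oscState ℓ n).2.2
  · rw [fst_even ℓ h]; linarith
  · rw [fst_odd ℓ h]

lemma mono' : ∀ a b : ℕ, 1 ≤ a → a ≤ b → ℓ a ≤ ℓ b := by
  intro a b ha hab
  induction b, hab using Nat.le_induction with
  | base => exact le_rfl
  | succ b hb ih => exact le_trans ih (hm b (by omega))

end withmono

lemma sigma_step (n : ℕ) :
    (oscState ℓ n).2.2 ≤ (oscState ℓ (n+1)).2.2 ∧
    (oscState ℓ (n+1)).2.2 ≤ (oscState ℓ n).2.2 + 1 := by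
  rw [sigma_def]; split_ifs <;> omega

lemma sigma_mono : Monotone (fun n => (oscState ℓ n).2.2) :=
  monotone_nat_of_le_succ (fun n => (sigma_step (ℓ := ℓ) n).1)

lemma sigma_le_self (n : ℕ) : (oscState ℓ n).2.2 ≤ n := by
  induction n with
  | zero => simp [zero_def]
  | succ n ih => have := (sigma_step (ℓ := ℓ) n).2; omega

end oscState

namespace oscState

variable {ℓ : ℕ → ℝ}

lemma sigma_progress (hm : ∀ n : ℕ, 1 ≤ n → ℓ n ≤ ℓ (n+1))
    (ht : Tendsto ℓ atTop atTop) (n : ℕ) :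
    ∃ m, n ≤ m ∧ (oscState ℓ n).2.2 < (oscState ℓ m).2.2 := by
  by_contra hcon
  push_neg at hcon
  have hconst : ∀ m, n ≤ m → (oscState ℓ m).2.2 = (oscState ℓ n).2.2 :=
    fun m hmn => le_antisymm (hcon m hmn) (sigma_mono (ℓ := ℓ) hmn)
  have hT1 : 1 ≤ oscT (oscState ℓ n).2.2 := oscT_ge_one _
  set T := oscT (oscState ℓ n).2.2 with hTdef
  by_cases hev : Even (oscState ℓ n).2.2
  · -- down phase forever
    have hclaim1 : ∀ m, n ≤ m →
        (oscState ℓ m).1 = (oscState ℓ n).1 - (ℓ (m+1) - ℓ (n+1))/2 := by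
      intro m hmn
      induction m, hmn using Nat.le_induction with
      | base => simp
      | succ m hmn ih =>
          have hevm : Even (oscState ℓ m).2.2 := by rw [hconst m hmn]; exact hev
          rw [fst_even ℓ hevm, ih]; ring
    obtain ⟨m₁, hm₁n, hm₁⟩ : ∃ m₁, n ≤ m₁ ∧
        ℓ (n+1) + 2*((oscState ℓ n).1 + 2*T) ≤ ℓ (m₁+1) := by
      have h1 : ∀ᶠ m : ℕ in atTop, ℓ (n+1) + 2*((oscState ℓ n).1 + 2*T) ≤ ℓ (m+1) :=
        (ht.comp (tendsto_add_atTop_nat 1)).eventually_ge_atTop _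
      obtain ⟨m₁, h2, h3⟩ := ((eventually_ge_atTop n).and h1).exists
      exact ⟨m₁, h2, h3⟩
    have he2 : ∀ m, m₁ ≤ m → (oscState ℓ m).1 ≤ -(2*T) := by
      intro m hm2
      rw [hclaim1 m (le_trans hm₁n hm2)]
      have : ℓ (m₁+1) ≤ ℓ (m+1) := mono' hm (m₁+1) (m+1) (by omega) (by omega)
      linarith
    have hS : ∀ m, m₁ ≤ m →
        (oscState ℓ m).2.1 ≤ (oscState ℓ m₁).2.1 - 2*T*((m:ℝ) - (m₁:ℝ)) := by
      intro m hm2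
      induction m, hm2 using Nat.le_induction with
      | base => simp
      | succ m hm2 ih =>
          have hsnd := snd_succ ℓ m
          have hee := he2 (m+1) (by omega)
          push_cast
          push_cast at ih
          rw [hsnd]
          linarith
    obtain ⟨m, hmm₁, hmbig⟩ : ∃ m, m₁ ≤ m ∧
        (oscState ℓ m₁).2.1 + 2*T*(m₁:ℝ) ≤ T*(m:ℝ) := by
      obtain ⟨k, hk⟩ := exists_nat_ge (((oscState ℓ m₁).2.1 + 2*T*(m₁:ℝ))/T)
      have hTpos : (0:ℝ) < T := by linarith
      rw [div_le_iff₀ hTpos] at hk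
      refine ⟨max k m₁, le_max_right _ _, ?_⟩
      have hcast : (k:ℝ) ≤ ((max k m₁ : ℕ):ℝ) := Nat.cast_le.2 (le_max_left _ _)
      nlinarith
    have heven : Even (oscState ℓ m).2.2 := by
      rw [hconst m (le_trans hm₁n hmm₁)]; exact hev
    have hcond1 : (oscState ℓ (m+1)).1 ≤ -(T) := by
      have := he2 (m+1) (by omega); linarith
    have hcond2 : (oscState ℓ (m+1)).2.1 ≤ -(T) * ((m:ℝ)+2) := by
      have := hS (m+1) (by omega)
      push_cast at this
      nlinarith
    have htrans : (oscState ℓ (m+1)).2.2 = (oscState ℓ n).2.2 + 1 := by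
      rw [sigma_def, hconst m (le_trans hm₁n hmm₁)]
      rw [if_pos (Or.inl ⟨hev, hcond1, hcond2⟩)]
    have h2 := hconst (m+1) (by omega)
    omega
  · -- up phase forever
    have hclaim1 : ∀ m, n ≤ m →
        (oscState ℓ m).1 = (oscState ℓ n).1 + (ℓ (m+1) - ℓ (n+1)) := by
      intro m hmn
      induction m, hmn using Nat.le_induction with
      | base => simp
      | succ m hmn ih =>
          have hevm : ¬ Even (oscState ℓ m).2.2 := by rw [hconst m hmn]; exact hev
          rw [fst_odd ℓ hevm, ih]; ring
    obtain ⟨m₁, hm₁n, hm₁⟩ : ∃ m₁, n ≤ m₁ ∧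
        ℓ (n+1) + (2*T - (oscState ℓ n).1) ≤ ℓ (m₁+1) := by
      have h1 : ∀ᶠ m : ℕ in atTop, ℓ (n+1) + (2*T - (oscState ℓ n).1) ≤ ℓ (m+1) :=
        (ht.comp (tendsto_add_atTop_nat 1)).eventually_ge_atTop _
      obtain ⟨m₁, h2, h3⟩ := ((eventually_ge_atTop n).and h1).exists
      exact ⟨m₁, h2, h3⟩
    have he2 : ∀ m, m₁ ≤ m → 2*T ≤ (oscState ℓ m).1 := by
      intro m hm2
      rw [hclaim1 m (le_trans hm₁n hm2)]
      have : ℓ (m₁+1) ≤ ℓ (m+1) := mono' hm (m₁+1) (m+1) (by omega) (by omega)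
      linarith
    have hS : ∀ m, m₁ ≤ m →
        (oscState ℓ m₁).2.1 + 2*T*((m:ℝ) - (m₁:ℝ)) ≤ (oscState ℓ m).2.1 := by
      intro m hm2
      induction m, hm2 using Nat.le_induction with
      | base => simp
      | succ m hm2 ih =>
          have hsnd := snd_succ ℓ m
          have hee := he2 (m+1) (by omega)
          push_cast
          push_cast at ih
          rw [hsnd]
          linarith
    obtain ⟨m, hmm₁, hmbig⟩ : ∃ m, m₁ ≤ m ∧
        2*T*(m₁:ℝ) - (oscState ℓ m₁).2.1 ≤ T*(m:ℝ) := by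
      obtain ⟨k, hk⟩ := exists_nat_ge ((2*T*(m₁:ℝ) - (oscState ℓ m₁).2.1)/T)
      have hTpos : (0:ℝ) < T := by linarith
      rw [div_le_iff₀ hTpos] at hk
      refine ⟨max k m₁, le_max_right _ _, ?_⟩
      have hcast : (k:ℝ) ≤ ((max k m₁ : ℕ):ℝ) := Nat.cast_le.2 (le_max_left _ _)
      nlinarith
    have hcond1 : T ≤ (oscState ℓ (m+1)).1 := by
      have := he2 (m+1) (by omega); linarith
    have hcond2 : T * ((m:ℝ)+2) ≤ (oscState ℓ (m+1)).2.1 := by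
      have := hS (m+1) (by omega)
      push_cast at this
      nlinarith
    have htrans : (oscState ℓ (m+1)).2.2 = (oscState ℓ n).2.2 + 1 := by
      rw [sigma_def, hconst m (le_trans hm₁n hmm₁)]
      rw [if_pos (Or.inr ⟨hev, hcond1, hcond2⟩)]
    have h2 := hconst (m+1) (by omega)
    omega

end oscState

namespace oscState

variable {ℓ : ℕ → ℝ}

lemma sigma_unbounded (hm : ∀ n : ℕ, 1 ≤ n → ℓ n ≤ ℓ (n+1))
    (ht : Tendsto ℓ atTop atTop) (v : ℕ) : ∃ n, v ≤ (oscState ℓ n).2.2 := by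
  induction v with
  | zero => exact ⟨0, by omega⟩
  | succ v ih =>
      obtain ⟨n, hn⟩ := ih
      obtain ⟨m, hnm, hlt⟩ := sigma_progress hm ht n
      exact ⟨m, by omega⟩

lemma sigma_exact (hm : ∀ n : ℕ, 1 ≤ n → ℓ n ≤ ℓ (n+1))
    (ht : Tendsto ℓ atTop atTop) (v : ℕ) :
    ∃ n, (oscState ℓ n).2.2 = v ∧ (oscState ℓ (n+1)).2.2 = v + 1 := by
  obtain ⟨N, hN⟩ := sigma_unbounded hm ht (v+1)
  have hex : ∃ n, v + 1 ≤ (oscState ℓ n).2.2 := ⟨N, hN⟩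
  classical
  have hfind : v + 1 ≤ (oscState ℓ (Nat.find hex)).2.2 := Nat.find_spec hex
  have hn₁ : Nat.find hex ≠ 0 := by
    intro h
    rw [h] at hfind
    have : (oscState ℓ 0).2.2 = 0 := rfl
    omega
  obtain ⟨n, hEq⟩ : ∃ n, Nat.find hex = n + 1 := ⟨Nat.find hex - 1, by omega⟩
  rw [hEq] at hfind
  have hlt : ¬ (v + 1 ≤ (oscState ℓ n).2.2) := Nat.find_min hex (by omega)
  have hstep := sigma_step (ℓ := ℓ) n
  exact ⟨n, by omega, by omega⟩

/-- Down events: arbitrarily late, arbitrarily deep. -/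
lemma events_down (hm : ∀ n : ℕ, 1 ≤ n → ℓ n ≤ ℓ (n+1))
    (ht : Tendsto ℓ atTop atTop) (A : ℝ) (n₀ : ℕ) :
    ∃ m, n₀ ≤ m ∧ (oscState ℓ m).1 ≤ -A ∧ (oscState ℓ m).2.1 ≤ -A * ((m:ℝ)+1) := by
  set v := 2*(n₀ + ⌈A⌉₊ + 1) with hv
  obtain ⟨n, hn1, hn2⟩ := sigma_exact hm ht v
  have hvev : Even (oscState ℓ n).2.2 := by rw [hn1]; exact ⟨n₀ + ⌈A⌉₊ + 1, by omega⟩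
  have hAT : A ≤ oscT (oscState ℓ n).2.2 := by
    have h1 : A ≤ (⌈A⌉₊ : ℝ) := Nat.le_ceil A
    have h2 : ((oscState ℓ n).2.2 / 2 : ℕ) = n₀ + ⌈A⌉₊ + 1 := by omega
    rw [oscT, h2]
    push_cast
    linarith
  have hcond : (oscState ℓ (n+1)).1 ≤ -(oscT (oscState ℓ n).2.2) ∧
      (oscState ℓ (n+1)).2.1 ≤ -(oscT (oscState ℓ n).2.2) * ((n:ℝ)+2) := by
    by_cases hC : (Even (oscState ℓ n).2.2 ∧
        (oscState ℓ (n+1)).1 ≤ -(oscT (oscState ℓ n).2.2) ∧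
        (oscState ℓ (n+1)).2.1 ≤ -(oscT (oscState ℓ n).2.2) * ((n:ℝ)+2)) ∨
       (¬ Even (oscState ℓ n).2.2 ∧ oscT (oscState ℓ n).2.2 ≤ (oscState ℓ (n+1)).1 ∧
        oscT (oscState ℓ n).2.2 * ((n:ℝ)+2) ≤ (oscState ℓ (n+1)).2.1)
    · rcases hC with h | h
      · exact h.2
      · exact absurd hvev h.1
    · rw [sigma_def, if_neg hC] at hn2
      omega
  have hnn₀ : n₀ ≤ n := by
    have := sigma_le_self (ℓ := ℓ) n
    omega
  have hT1 : 1 ≤ oscT (oscState ℓ n).2.2 := oscT_ge_one _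
  refine ⟨n+1, by omega, le_trans hcond.1 (by linarith), ?_⟩
  have := hcond.2
  have hmul : -(oscT (oscState ℓ n).2.2) * ((n:ℝ)+2) ≤ -A * ((n:ℝ)+2) := by
    have : (0:ℝ) ≤ (n:ℝ) + 2 := by positivity
    nlinarith
  push_cast
  linarith

/-- Up events. -/
lemma events_up (hm : ∀ n : ℕ, 1 ≤ n → ℓ n ≤ ℓ (n+1))
    (ht : Tendsto ℓ atTop atTop) (A : ℝ) (n₀ : ℕ) :
    ∃ m, n₀ ≤ m ∧ A ≤ (oscState ℓ m).1 ∧ A * ((m:ℝ)+1) ≤ (oscState ℓ m).2.1 := by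
  set v := 2*(n₀ + ⌈A⌉₊ + 1) + 1 with hv
  obtain ⟨n, hn1, hn2⟩ := sigma_exact hm ht v
  have hvev : ¬ Even (oscState ℓ n).2.2 := by
    rw [hn1]
    rintro ⟨r, hr⟩
    omega
  have hAT : A ≤ oscT (oscState ℓ n).2.2 := by
    have h1 : A ≤ (⌈A⌉₊ : ℝ) := Nat.le_ceil A
    have h2 : ((oscState ℓ n).2.2 / 2 : ℕ) = n₀ + ⌈A⌉₊ + 1 := by omega
    rw [oscT, h2]
    push_cast
    linarith
  have hcond : oscT (oscState ℓ n).2.2 ≤ (oscState ℓ (n+1)).1 ∧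
      oscT (oscState ℓ n).2.2 * ((n:ℝ)+2) ≤ (oscState ℓ (n+1)).2.1 := by
    by_cases hC : (Even (oscState ℓ n).2.2 ∧
        (oscState ℓ (n+1)).1 ≤ -(oscT (oscState ℓ n).2.2) ∧
        (oscState ℓ (n+1)).2.1 ≤ -(oscT (oscState ℓ n).2.2) * ((n:ℝ)+2)) ∨
       (¬ Even (oscState ℓ n).2.2 ∧ oscT (oscState ℓ n).2.2 ≤ (oscState ℓ (n+1)).1 ∧
        oscT (oscState ℓ n).2.2 * ((n:ℝ)+2) ≤ (oscState ℓ (n+1)).2.1)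
    · rcases hC with h | h
      · exact absurd h.1 hvev
      · exact h.2
    · rw [sigma_def, if_neg hC] at hn2
      omega
  have hnn₀ : n₀ ≤ n := by
    have := sigma_le_self (ℓ := ℓ) n
    omega
  refine ⟨n+1, by omega, le_trans hAT hcond.1, ?_⟩
  have := hcond.2
  have hmul : A * ((n:ℝ)+2) ≤ oscT (oscState ℓ n).2.2 * ((n:ℝ)+2) := by
    have : (0:ℝ) ≤ (n:ℝ) + 2 := by positivity
    nlinarith
  push_cast
  linarith

end oscState
end

/-- Section 3, construction of an oscillating sequence: given `N ∈ LC`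
with quotients `ν_p = N_p/N_{p-1}` satisfying `liminf ν_{Qj}/ν_j > 1` (for some `Q ≥ 2`)
and `sup_j ν_{2j}/ν_j < ∞`, there exists `M ∈ LC` with moderate growth (M2) whose
quotients `μ_p = M_p/M_{p-1}` satisfy `1 < liminf μ_{Qj}/μ_j ≤ limsup μ_{Qj}/μ_j < ∞`,
`liminf μ_p/ν_p = 0`, `limsup μ_p/ν_p = +∞`, `liminf (M_p/N_p)^{1/p} = 0`,
`limsup (M_p/N_p)^{1/p} = +∞`; in particular neither `M ⪯ N` nor `N ⪯ M`. -/
theorem oscillating_sequence_construction (N : ℕ → ℝ) (hN : IsLC N) (Q : ℕ) (hQ : 2 ≤ Q)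
    (hliminf : ∃ c : ℝ, 1 < c ∧ ∀ᶠ j : ℕ in Filter.atTop,
      c ≤ (N (Q * j) / N (Q * j - 1)) / (N j / N (j - 1)))
    (hsup : ∃ b : ℝ, ∀ j : ℕ, 1 ≤ j → (N (2 * j) / N (2 * j - 1)) / (N j / N (j - 1)) ≤ b) :
    ∃ M : ℕ → ℝ, IsLC M ∧ condM2 M ∧
      (∃ c : ℝ, 1 < c ∧ ∀ᶠ j : ℕ in Filter.atTop,
        c ≤ (M (Q * j) / M (Q * j - 1)) / (M j / M (j - 1))) ∧
      (∃ b : ℝ, ∀ᶠ j : ℕ in Filter.atTop,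
        (M (Q * j) / M (Q * j - 1)) / (M j / M (j - 1)) ≤ b) ∧
      (∀ ε : ℝ, 0 < ε → ∃ᶠ p : ℕ in Filter.atTop,
        (M p / M (p - 1)) / (N p / N (p - 1)) < ε) ∧
      (∀ K : ℝ, ∃ᶠ p : ℕ in Filter.atTop,
        K < (M p / M (p - 1)) / (N p / N (p - 1))) ∧
      (∀ ε : ℝ, 0 < ε → ∃ᶠ p : ℕ in Filter.atTop, (M p / N p) ^ (1 / (p : ℝ)) < ε) ∧
      (∀ K : ℝ, ∃ᶠ p : ℕ in Filter.atTop, K < (M p / N p) ^ (1 / (p : ℝ))) ∧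
      ¬seqPreceq M N ∧ ¬seqPreceq N M := by
  classical
  obtain ⟨c, hc1, hcev⟩ := hliminf
  obtain ⟨b0, hb0⟩ := hsup
  have hNpos : ∀ p, 0 < N p := hN.pos
  set ν : ℕ → ℝ := fun p => N p / N (p - 1) with hνdef
  have hνpos : ∀ p, 0 < ν p := fun p => div_pos (hNpos p) (hNpos _)
  have hνratio : ∀ p : ℕ, N p / N (p-1) = ν p := fun p => rfl
  set L : ℕ → ℝ := fun p => Real.log (ν p) with hLdef
  have hexpL : ∀ p, Real.exp (L p) = ν p := fun p => Real.exp_log (hνpos p)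
  have hνsucc : ∀ p : ℕ, ν (p+1) ≤ ν (p+2) := by
    intro p
    have h := hN.logConvex p
    have e1 : ν (p+1) = N (p+1) / N p := by simp [hνdef]
    have e2 : ν (p+2) = N (p+2) / N (p+1) := by simp [hνdef]
    rw [e1, e2, div_le_div_iff₀ (hNpos p) (hNpos (p+1))]
    nlinarith [hNpos (p+1)]
  have hνmono : ∀ a b : ℕ, 1 ≤ a → a ≤ b → ν a ≤ ν b := by
    intro a b ha hab
    induction b, hab using Nat.le_induction with
    | base => exact le_rfl
    | succ b hb ih =>
        refine le_trans ih ?_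
        obtain ⟨t, rfl⟩ : ∃ t, b = t + 1 := ⟨b - 1, by omega⟩
        exact hνsucc t
  have hν1 : 1 ≤ ν 1 := by
    show (1:ℝ) ≤ N 1 / N (1-1)
    norm_num [hN.norm0]
    exact hN.norm1
  have hνge1 : ∀ p : ℕ, 1 ≤ p → 1 ≤ ν p := fun p hp => le_trans hν1 (hνmono 1 p le_rfl hp)
  have hLnn : ∀ p : ℕ, 1 ≤ p → 0 ≤ L p := fun p hp => Real.log_nonneg (hνge1 p hp)
  have hLmono : ∀ a b : ℕ, 1 ≤ a → a ≤ b → L a ≤ L b :=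
    fun a b ha hab => Real.log_le_log (hνpos a) (hνmono a b ha hab)
  have hLm : ∀ n : ℕ, 1 ≤ n → L n ≤ L (n+1) := fun n hn => hLmono n (n+1) hn (by omega)
  have hNprod : ∀ p, N p = ∏ k ∈ Finset.range p, ν (k+1) := by
    intro p
    induction p with
    | zero => simpa using hN.norm0
    | succ p ih =>
        rw [Finset.prod_range_succ, ← ih]
        have e1 : ν (p+1) = N (p+1) / N p := by simp [hνdef]
        rw [e1, mul_comm]
        exact (div_mul_cancel₀ _ (hNpos p).ne').symm
  have hνtop : Tendsto ν atTop atTop := by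
    have h2 : ∀ p : ℕ, 1 ≤ p → N p ^ (1/(p:ℝ)) ≤ ν p := by
      intro p hp
      have h1 : N p ≤ ν p ^ p := by
        rw [hNprod p]
        calc ∏ k ∈ Finset.range p, ν (k+1)
            ≤ ∏ k ∈ Finset.range p, ν p := by
              refine Finset.prod_le_prod (fun k _ => (hνpos _).le) (fun k hk => ?_)
              exact hνmono (k+1) p (by omega) (by
                have := Finset.mem_range.1 hk; omega)
          _ = ν p ^ p := by rw [Finset.prod_const, Finset.card_range]
      have hple : (N p) ^ (1/(p:ℝ)) ≤ (ν p ^ p) ^ (1/(p:ℝ)) :=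
        Real.rpow_le_rpow (hNpos p).le h1 (by positivity)
      have hpne : ((p:ℝ)) ≠ 0 := Nat.cast_ne_zero.2 (by omega)
      rwa [← Real.rpow_natCast (ν p) p, ← Real.rpow_mul (hνpos p).le,
        mul_one_div_cancel hpne, Real.rpow_one] at hple
    exact tendsto_atTop_mono' atTop (eventually_atTop.2 ⟨1, h2⟩) hN.root_tendsto
  have hLtop : Tendsto L atTop atTop := Real.tendsto_log_atTop.comp hνtop
  -- the oscillation state machine
  set E : ℕ → ℝ := fun n => (oscState L n).1 with hEdef
  set SN : ℕ → ℝ := fun n => (oscState L n).2.1 with hSNdef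
  set q : ℕ → ℝ := fun n => L (n+1) + E n with hqdef
  have hE0 : E 0 = 0 := rfl
  have hSN0 : SN 0 = 0 := rfl
  have hSNsucc : ∀ n, SN (n+1) = SN n + E (n+1) := fun n => oscState.snd_succ L n
  have hδnn : ∀ n : ℕ, 0 ≤ L (n+2) - L (n+1) := fun n => by
    have := hLm (n+1) (by omega); linarith
  have hEstep_lo : ∀ n, E n - (L (n+2) - L (n+1))/2 ≤ E (n+1) :=
    fun n => oscState.fst_step_lower hLm n
  have hEstep_hi : ∀ n, E (n+1) ≤ E n + (L (n+2) - L (n+1)) :=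
    fun n => oscState.fst_step_upper hLm n
  have hq0 : q 0 = L 1 := by simp [hqdef, hE0]
  have hqhalf : ∀ n, q n + (L (n+2) - L (n+1))/2 ≤ q (n+1) := by
    intro n
    have h := hEstep_lo n
    show L (n+1) + E n + (L (n+2) - L (n+1))/2 ≤ L (n+2) + E (n+1)
    linarith
  have hq2 : ∀ n, q (n+1) ≤ q n + 2*(L (n+2) - L (n+1)) := by
    intro n
    have h := hEstep_hi n
    show L (n+2) + E (n+1) ≤ L (n+1) + E n + 2*(L (n+2) - L (n+1))
    linarith
  clear_value ν L E SN q
  have hqlowdiff : ∀ a b : ℕ, a ≤ b → (L (b+1) - L (a+1))/2 ≤ q b - q a := by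
    intro a b hab
    induction b, hab using Nat.le_induction with
    | base => simp
    | succ b hb ih => have h1 := hqhalf b; linarith
  have hqupdiff : ∀ a b : ℕ, a ≤ b → q b - q a ≤ 2*(L (b+1) - L (a+1)) := by
    intro a b hab
    induction b, hab using Nat.le_induction with
    | base => simp
    | succ b hb ih =>
        have h1 := hq2 b
        have h2 := hδnn b
        have h3 : L (b+1) ≤ L (b+2) := by linarith
        linarith
  have hqle : ∀ a b : ℕ, a ≤ b → q a ≤ q b := by
    intro a b hab
    have h1 := hqlowdiff a b hab
    have h2 : L (a+1) ≤ L (b+1) := hLmono (a+1) (b+1) (by omega) (by omega)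
    linarith
  have hqnn : ∀ n, 0 ≤ q n := fun n =>
    le_trans (by rw [hq0]; exact hLnn 1 le_rfl) (hqle 0 n (Nat.zero_le n))
  have hqtop : Tendsto q atTop atTop := by
    have hlow : ∀ n, L (n+1)/2 ≤ q n := by
      intro n
      have h := hqlowdiff 0 n (Nat.zero_le n)
      rw [hq0] at h
      have := hLnn 1 le_rfl
      linarith
    have h1 : Tendsto (fun n : ℕ => L (n+1)/2) atTop atTop :=
      (hLtop.comp (tendsto_add_atTop_nat 1)).atTop_div_const (by norm_num)
    exact tendsto_atTop_mono hlow h1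
  -- the sequence M
  set M : ℕ → ℝ := fun p => ∏ k ∈ Finset.range p, Real.exp (q k) with hMdef
  have hMeq : ∀ p, M p = ∏ k ∈ Finset.range p, Real.exp (q k) := fun p => rfl
  have hM0 : M 0 = 1 := rfl
  have hMpos : ∀ p, 0 < M p := by
    intro p; rw [hMeq p]; exact Finset.prod_pos (fun k _ => Real.exp_pos _)
  have hMsucc : ∀ p, M (p+1) = M p * Real.exp (q p) := by
    intro p; rw [hMeq p, hMeq (p+1)]; exact Finset.prod_range_succ _ _
  have hMdiv : ∀ p, M (p+1) / M p = Real.exp (q p) := fun p => by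
    rw [hMsucc p, mul_div_cancel_left₀ _ (hMpos p).ne']
  have hMge1 : ∀ p, 1 ≤ M p := by
    intro p
    rw [hMeq p]
    have h := Finset.prod_le_prod (s := Finset.range p) (f := fun _ => (1:ℝ))
      (g := fun k => Real.exp (q k)) (fun k _ => zero_le_one)
      (fun k _ => Real.one_le_exp (hqnn k))
    simpa using h
  have hMratio : ∀ p : ℕ, 1 ≤ p → M p / M (p-1) = Real.exp (q (p-1)) := by
    intro p hp
    obtain ⟨t, rfl⟩ : ∃ t, p = t + 1 := ⟨p - 1, by omega⟩
    simpa using hMdiv t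
  clear_value M
  have hMN : ∀ m : ℕ, M (m+1) / N (m+1) = Real.exp (SN m) := by
    intro m
    induction m with
    | zero =>
        have h1 : M 1 = Real.exp (q 0) := by
          rw [hMsucc 0, hM0, one_mul]
        have h2 : N 1 = ν 1 := by
          rw [← hνratio 1]; norm_num [hN.norm0]
        rw [h1, hq0, hexpL 1, ← h2, div_self (hNpos 1).ne', hSN0, Real.exp_zero]
    | succ m ih =>
        have hstep : N (m+2) = N (m+1) * ν (m+2) := by
          have e1 : ν (m+2) = N (m+2) / N (m+1) := by simp [hνdef]
          rw [e1, mul_comm]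
          exact (div_mul_cancel₀ _ (hNpos (m+1)).ne').symm
        rw [hMsucc (m+1), hstep, hSNsucc m]
        rw [show M (m+1) * Real.exp (q (m+1)) / (N (m+1) * ν (m+2)) =
          (M (m+1) / N (m+1)) * (Real.exp (q (m+1)) / ν (m+2)) by ring]
        rw [ih, ← hexpL (m+2), ← Real.exp_sub, ← Real.exp_add]
        congr 1
        simp only [hqdef]
        ring
  -- dyadic estimates
  obtain ⟨b₁, hb₁def⟩ : ∃ x : ℝ, x = max b0 1 := ⟨_, rfl⟩
  have hb₁ : 1 ≤ b₁ := by rw [hb₁def]; exact le_max_right _ _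
  have hb₁pos : 0 < b₁ := by linarith
  have hν2 : ∀ j : ℕ, 1 ≤ j → ν (2*j) ≤ b₁ * ν j := by
    intro j hj
    have h := hb0 j hj
    rw [hνratio, hνratio] at h
    rw [div_le_iff₀ (hνpos j)] at h
    have h2 : b0 * ν j ≤ b₁ * ν j := by
      refine mul_le_mul_of_nonneg_right ?_ (hνpos j).le
      rw [hb₁def]; exact le_max_left _ _
    linarith
  have hdy : ∀ (m k : ℕ), 1 ≤ k → ν (2^m * k) ≤ b₁^m * ν k := by
    intro m
    induction m with
    | zero => intro k hk; simp
    | succ m ih =>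
        intro k hk
        have he : 2^(m+1) * k = 2*(2^m * k) := by ring
        rw [he]
        have h1 : ν (2*(2^m * k)) ≤ b₁ * ν (2^m * k) :=
          hν2 _ (Nat.mul_pos (Nat.two_pow_pos m) hk)
        have h2 : b₁ * ν (2^m * k) ≤ b₁ * (b₁^m * ν k) :=
          mul_le_mul_of_nonneg_left (ih k hk) hb₁pos.le
        calc ν (2*(2^m * k)) ≤ b₁ * (b₁^m * ν k) := le_trans h1 h2
          _ = b₁^(m+1) * ν k := by ring
  obtain ⟨β, hβdef⟩ : ∃ x : ℝ, x = Real.log b₁ / Real.log 2 := ⟨_, rfl⟩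
  have hβnn : 0 ≤ β := by
    rw [hβdef]
    exact div_nonneg (Real.log_nonneg hb₁) (Real.log_nonneg one_le_two)
  have h2β : (2:ℝ) ^ β = b₁ := by
    rw [Real.rpow_def_of_pos two_pos, hβdef]
    rw [mul_div_assoc']
    rw [mul_comm, mul_div_assoc, div_self (Real.log_pos one_lt_two).ne', mul_one]
    exact Real.exp_log hb₁pos
  have hpow2β : ∀ m : ℕ, ((2:ℝ)^m) ^ β = b₁ ^ m := by
    intro m
    rw [← Real.rpow_natCast (2:ℝ) m, ← Real.rpow_mul (by norm_num : (0:ℝ) ≤ 2),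
      mul_comm, Real.rpow_mul (by norm_num : (0:ℝ) ≤ 2), h2β, Real.rpow_natCast]
  have hLν : ∀ k j : ℕ, 1 ≤ k → k ≤ j → ν j ≤ b₁^2 * ((j:ℝ)/(k:ℝ))^β * ν k := by
    intro k j hk hkj
    set cc := (j + k - 1)/k with hcc
    set m := Nat.clog 2 cc with hmdef
    have hccpos : 1 ≤ cc := (Nat.one_le_div_iff hk).2 (by omega)
    have hjck : j ≤ cc * k := by
      set r := (j + k - 1) % k with hr
      have hdm : k * cc + r = j + k - 1 := Nat.div_add_mod _ _
      have hmod : r < k := Nat.mod_lt _ hk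
      rw [mul_comm]
      obtain ⟨X, hX⟩ : ∃ X, X = k * cc := ⟨_, rfl⟩
      rw [← hX] at hdm ⊢
      omega
    have hccm : cc ≤ 2^m := Nat.le_pow_clog one_lt_two cc
    have hj2m : j ≤ 2^m * k := le_trans hjck (Nat.mul_le_mul_right k hccm)
    have h2m2c : 2^m ≤ 2*cc := by
      rcases Nat.lt_or_ge cc 2 with h | h
      · have hcc1 : cc = 1 := by omega
        rw [hmdef, hcc1, Nat.clog_one_right]
        norm_num
      · have hmpos : 0 < m := Nat.clog_pos one_lt_two h
        have h2 := Nat.pow_pred_clog_lt_self one_lt_two (by omega : 1 < cc)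
        rw [Nat.pred_eq_sub_one] at h2
        rw [← hmdef] at h2
        have h2m : 2^m = 2*2^(m - 1) := by
          conv_lhs => rw [show m = (m - 1) + 1 by omega]
          rw [pow_succ]; ring
        omega
    have hkR : (0:ℝ) < (k:ℝ) := by exact_mod_cast hk
    have hcast : ((2:ℝ))^m ≤ 4*(j:ℝ)/(k:ℝ) := by
      have hc1 : ((cc:ℕ):ℝ) ≤ ((j + k - 1:ℕ):ℝ)/(k:ℝ) := Nat.cast_div_le
      have hc2 : ((j + k - 1:ℕ):ℝ) ≤ 2*(j:ℝ) := by
        have : j + k - 1 ≤ 2*j := by omega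
        exact_mod_cast this
      have hc3 : (cc:ℝ) ≤ 2*(j:ℝ)/(k:ℝ) := le_trans hc1 (by gcongr)
      have hc4 : ((2^m:ℕ):ℝ) ≤ 2*(cc:ℝ) := by exact_mod_cast h2m2c
      push_cast at hc4
      rw [show 4*(j:ℝ)/(k:ℝ) = 2*(2*(j:ℝ)/(k:ℝ)) by ring]
      linarith
    have hstep1 : ν j ≤ ν (2^m * k) := hνmono j (2^m * k) (by omega) hj2m
    have hstep2 : ν (2^m * k) ≤ b₁^m * ν k := hdy m k hk
    have hstep3 : b₁^m ≤ b₁^2 * ((j:ℝ)/(k:ℝ))^β := by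
      rw [← hpow2β m]
      have h1 : ((2:ℝ)^m)^β ≤ (4*(j:ℝ)/(k:ℝ))^β :=
        Real.rpow_le_rpow (by positivity) hcast hβnn
      have h2 : (4*(j:ℝ)/(k:ℝ))^β = ((4:ℝ)^β) * ((j:ℝ)/(k:ℝ))^β := by
        rw [show 4*(j:ℝ)/(k:ℝ) = 4*((j:ℝ)/(k:ℝ)) by ring]
        exact Real.mul_rpow (by norm_num) (by positivity)
      have h3 : ((4:ℝ))^β = b₁^2 := by
        rw [show (4:ℝ) = (2:ℝ)^(2:ℕ) by norm_num]
        exact hpow2β 2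
      rw [h2, h3] at h1
      exact h1
    calc ν j ≤ b₁^m * ν k := le_trans hstep1 hstep2
      _ ≤ (b₁^2 * ((j:ℝ)/(k:ℝ))^β) * ν k :=
          mul_le_mul_of_nonneg_right hstep3 (hνpos k).le
  have hchoosereal : ∀ p q' : ℕ,
      ∏ k ∈ Finset.range p, (((q'+k+1:ℕ)):ℝ)/(((k+1:ℕ)):ℝ) = (Nat.choose (p+q') p : ℝ) := by
    intro p q'
    induction p with
    | zero => simp
    | succ p ih =>
        rw [Finset.prod_range_succ, ih]
        have hid : (p+q'+1) * Nat.choose (p+q') p = Nat.choose (p+q'+1) (p+1) * (p+1) := by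
          have h := Nat.add_one_mul_choose_eq (p+q') p
          simpa [Nat.succ_eq_add_one] using h
        have h1 : ((p:ℝ)+1) ≠ 0 := by positivity
        have hidR : ((p:ℝ)+(q':ℝ)+1) * (Nat.choose (p+q') p : ℝ)
            = (Nat.choose (p+q'+1) (p+1) : ℝ) * ((p:ℝ)+1) := by exact_mod_cast hid
        have hgoal : (p+1) + q' = p + q' + 1 := by omega
        rw [hgoal]
        push_cast
        field_simp
        linarith [hidR]
  have hchoose2 : ∀ n k : ℕ, (Nat.choose n k : ℝ) ≤ 2^n := by
    intro n k
    have h1 : Nat.choose n k ≤ 2^n := by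
      rcases le_or_gt k n with h | h
      · calc Nat.choose n k ≤ ∑ i ∈ Finset.range (n+1), Nat.choose n i :=
            Finset.single_le_sum (fun i _ => Nat.zero_le _) (Finset.mem_range.2 (by omega))
          _ = 2^n := Nat.sum_range_choose n
      · rw [Nat.choose_eq_zero_of_lt h]; exact Nat.zero_le _
    exact_mod_cast h1
  have hfact : ∀ q' k : ℕ, Real.exp (q (q'+k)) ≤
      (b₁^2 * (((q'+k+1:ℕ):ℝ)/(((k+1:ℕ)):ℝ))^β)^2 * Real.exp (q k) := by
    intro q' k
    have h1 : q (q'+k) - q k ≤ 2*(L (q'+k+1) - L (k+1)) := by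
      have := hqupdiff k (q'+k) (Nat.le_add_left k q')
      convert this using 3 <;> omega
    have h4 : Real.exp (2*(L (q'+k+1) - L (k+1))) = (ν (q'+k+1) / ν (k+1))^2 := by
      rw [two_mul, Real.exp_add, Real.exp_sub, hexpL, hexpL]; ring
    have h5 : ν (q'+k+1) / ν (k+1) ≤ b₁^2 * (((q'+k+1:ℕ):ℝ)/(((k+1:ℕ)):ℝ))^β := by
      rw [div_le_iff₀ (hνpos (k+1))]
      exact hLν (k+1) (q'+k+1) (by omega) (by omega)
    have h6 : (ν (q'+k+1) / ν (k+1))^2 ≤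
        (b₁^2 * (((q'+k+1:ℕ):ℝ)/(((k+1:ℕ)):ℝ))^β)^2 :=
      pow_le_pow_left₀ (div_nonneg (hνpos _).le (hνpos _).le) h5 2
    calc Real.exp (q (q'+k)) = Real.exp (q (q'+k) - q k) * Real.exp (q k) := by
          rw [← Real.exp_add]; ring_nf
      _ ≤ Real.exp (2*(L (q'+k+1) - L (k+1))) * Real.exp (q k) :=
          mul_le_mul_of_nonneg_right (Real.exp_le_exp.2 h1) (Real.exp_pos _).le
      _ = (ν (q'+k+1) / ν (k+1))^2 * Real.exp (q k) := by rw [h4]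
      _ ≤ _ := mul_le_mul_of_nonneg_right h6 (Real.exp_pos _).le
  have hkey : ∀ p q' : ℕ,
      ∏ k ∈ Finset.range p, Real.exp (q (q'+k)) ≤ (b₁^6)^(p+q') * M p := by
    intro p q'
    have step1 : ∏ k ∈ Finset.range p, Real.exp (q (q'+k)) ≤
        ∏ k ∈ Finset.range p,
          ((b₁^2 * (((q'+k+1:ℕ):ℝ)/(((k+1:ℕ)):ℝ))^β)^2 * Real.exp (q k)) :=
      Finset.prod_le_prod (fun k _ => (Real.exp_pos _).le) (fun k _ => hfact q' k)
    have step2 : ∏ k ∈ Finset.range p,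
          ((b₁^2 * (((q'+k+1:ℕ):ℝ)/(((k+1:ℕ)):ℝ))^β)^2 * Real.exp (q k))
        = (∏ k ∈ Finset.range p, (b₁^2 * (((q'+k+1:ℕ):ℝ)/(((k+1:ℕ)):ℝ))^β))^2 * M p := by
      rw [Finset.prod_mul_distrib, Finset.prod_pow, hMeq p]
    have step3 : ∏ k ∈ Finset.range p, (b₁^2 * (((q'+k+1:ℕ):ℝ)/(((k+1:ℕ)):ℝ))^β)
        = b₁^(2*p) * ((Nat.choose (p+q') p : ℝ))^β := by
      rw [Finset.prod_mul_distrib, Finset.prod_const, Finset.card_range, ← pow_mul]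
      congr 1
      rw [Real.finset_prod_rpow _ _ (fun k _ => by positivity) β, hchoosereal p q']
    have step4 : ((Nat.choose (p+q') p : ℝ))^β ≤ b₁^(p+q') := by
      rw [← hpow2β (p+q')]
      exact Real.rpow_le_rpow (Nat.cast_nonneg _) (hchoose2 (p+q') p) hβnn
    have hble : b₁^(2*p) * ((Nat.choose (p+q') p : ℝ))^β ≤ b₁^(2*p) * b₁^(p+q') :=
      mul_le_mul_of_nonneg_left step4 (by positivity)
    have step5 : (b₁^(2*p) * ((Nat.choose (p+q') p : ℝ))^β)^2 ≤ (b₁^(3*p+q'))^2 := by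
      refine pow_le_pow_left₀ (by positivity) ?_ 2
      calc b₁^(2*p) * ((Nat.choose (p+q') p : ℝ))^β ≤ b₁^(2*p) * b₁^(p+q') := hble
        _ = b₁^(3*p+q') := by rw [← pow_add]; congr 1; omega
    have step6 : (b₁^(3*p+q'):ℝ)^2 ≤ (b₁^6)^(p+q') := by
      rw [← pow_mul, ← pow_mul]
      exact pow_le_pow_right₀ hb₁ (by omega)
    calc ∏ k ∈ Finset.range p, Real.exp (q (q'+k))
        ≤ (∏ k ∈ Finset.range p, (b₁^2 * (((q'+k+1:ℕ):ℝ)/(((k+1:ℕ)):ℝ))^β))^2 * M p := by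
          rw [← step2]; exact step1
      _ ≤ (b₁^6)^(p+q') * M p := by
          rw [step3]
          exact mul_le_mul_of_nonneg_right (le_trans step5 step6) (hMpos p).le
  have hMadd : ∀ p q' : ℕ, M (q' + p) = M q' * ∏ k ∈ Finset.range p, Real.exp (q (q'+k)) := by
    intro p q'
    induction p with
    | zero => simp
    | succ p ih =>
        rw [show q' + (p+1) = (q'+p) + 1 by omega, hMsucc (q'+p), ih,
          Finset.prod_range_succ, mul_assoc]
  have hcondM2 : condM2 M := by
    refine ⟨b₁^6, one_le_pow₀ hb₁, ?_⟩
    intro p p2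
    have h1 := hMadd p p2
    have h2 := hkey p p2
    calc M (p + p2) = M (p2 + p) := by rw [add_comm]
      _ = M p2 * ∏ k ∈ Finset.range p, Real.exp (q (p2+k)) := h1
      _ ≤ M p2 * ((b₁^6)^(p+p2) * M p) := mul_le_mul_of_nonneg_left h2 (hMpos p2).le
      _ = (b₁^6)^(p+p2) * M p * M p2 := by ring
  -- IsLC M
  have hMlc : IsLC M := by
    refine ⟨hMpos, hM0, hMge1 1, ?_, ?_⟩
    · intro p
      have hb : Real.exp (q p) ≤ Real.exp (q (p+1)) := Real.exp_le_exp.2 (hqle p (p+1) (by omega))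
      rw [hMsucc (p+1), hMsucc p]
      calc (M p * Real.exp (q p))^2
          = (M p * M p * Real.exp (q p)) * Real.exp (q p) := by ring
        _ ≤ (M p * M p * Real.exp (q p)) * Real.exp (q (p+1)) :=
            mul_le_mul_of_nonneg_left hb
              (mul_nonneg (mul_nonneg (hMpos p).le (hMpos p).le) (Real.exp_pos _).le)
        _ = M p * (M p * Real.exp (q p) * Real.exp (q (p+1))) := by ring
    · rw [tendsto_atTop]
      intro bb
      obtain ⟨C, hCdef⟩ : ∃ x : ℝ, x = max bb 1 := ⟨_, rfl⟩
      have hC1 : 1 ≤ C := by rw [hCdef]; exact le_max_right _ _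
      have hCbb : bb ≤ C := by rw [hCdef]; exact le_max_left _ _
      have hCpos : (0:ℝ) < C := by linarith
      obtain ⟨m, hm⟩ := (hqtop.eventually_ge_atTop (2*Real.log C)).exists_forall_of_atTop
      have hpow : ∀ p, m ≤ p → (C:ℝ)^(2*(p-m)) ≤ M p := by
        intro p hp
        induction p, hp using Nat.le_induction with
        | base => simpa using hMge1 m
        | succ p hp ih =>
            have hqp : 2*Real.log C ≤ q p := hm p (by omega)
            have hexpC : C^(2:ℕ) ≤ Real.exp (q p) := by
              have h1 : Real.exp (2*Real.log C) ≤ Real.exp (q p) := Real.exp_le_exp.2 hqp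
              rwa [show (2:ℝ)*Real.log C = ((2:ℕ):ℝ)*Real.log C by norm_num,
                Real.exp_nat_mul, Real.exp_log hCpos] at h1
            have he : 2*((p+1)-m) = 2*(p-m) + 2 := by omega
            rw [hMsucc p, he, pow_add]
            have h2 : (0:ℝ) ≤ C^(2*(p-m)) := by positivity
            have h3 := hMpos p
            nlinarith
      filter_upwards [eventually_ge_atTop (max (2*m) 1)] with p hp
      have hp1 : 1 ≤ p := le_trans (le_max_right _ _) hp
      have hp2m : 2*m ≤ p := le_trans (le_max_left _ _) hp
      have hCp : (C:ℝ)^p ≤ M p := by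
        refine le_trans ?_ (hpow p (by omega))
        exact pow_le_pow_right₀ hC1 (by omega)
      have hfin : C ≤ M p ^ (1/(p:ℝ)) := by
        have h2 : ((C:ℝ)^p) ^ (1/(p:ℝ)) ≤ M p ^ (1/(p:ℝ)) :=
          Real.rpow_le_rpow (by positivity) hCp (by positivity)
        rwa [← Real.rpow_natCast C p, ← Real.rpow_mul hCpos.le,
          mul_one_div_cancel (by exact_mod_cast (by omega : p ≠ 0) : ((p:ℝ)) ≠ 0),
          Real.rpow_one] at h2
      linarith
  -- (b) lower
  have hblow : ∃ c' : ℝ, 1 < c' ∧ ∀ᶠ j : ℕ in atTop,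
      c' ≤ (M (Q*j)/M (Q*j-1))/(M j/M (j-1)) := by
    refine ⟨Real.sqrt c, ?_, ?_⟩
    · calc (1:ℝ) = Real.sqrt 1 := by simp
        _ < Real.sqrt c := Real.sqrt_lt_sqrt (by norm_num) hc1
    · filter_upwards [hcev, eventually_ge_atTop 1] with j hj hj1
      have hQj : 1 ≤ Q*j := Nat.one_le_iff_ne_zero.2 (Nat.mul_ne_zero (by omega) (by omega))
      have hjQj : j ≤ Q*j := Nat.le_mul_of_pos_left j (by omega)
      rw [hMratio (Q*j) hQj, hMratio j hj1, ← Real.exp_sub]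
      have hd : (L (Q*j) - L j)/2 ≤ q (Q*j-1) - q (j-1) := by
        have h := hqlowdiff (j-1) (Q*j-1) (by omega)
        rwa [Nat.sub_add_cancel hQj, Nat.sub_add_cancel hj1] at h
      have hcν : c ≤ ν (Q*j) / ν j := by rw [hνratio, hνratio] at hj; exact hj
      have hexpdiff : Real.exp (L (Q*j) - L j) = ν (Q*j) / ν j := by
        rw [Real.exp_sub, hexpL, hexpL]
      calc Real.sqrt c ≤ Real.sqrt (Real.exp (L (Q*j) - L j)) :=
            Real.sqrt_le_sqrt (by rw [hexpdiff]; exact hcν)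
        _ ≤ Real.sqrt (Real.exp (((2:ℕ):ℝ)*(q (Q*j-1) - q (j-1)))) := by
            refine Real.sqrt_le_sqrt (Real.exp_le_exp.2 ?_)
            push_cast
            linarith
        _ = Real.exp (q (Q*j-1) - q (j-1)) := by
            rw [Real.exp_nat_mul, Real.sqrt_sq (Real.exp_pos _).le]
  -- (b) upper
  have hbup : ∃ B : ℝ, ∀ᶠ j : ℕ in atTop,
      (M (Q*j)/M (Q*j-1))/(M j/M (j-1)) ≤ B := by
    refine ⟨(b₁^2 * ((Q:ℕ):ℝ)^β)^2, ?_⟩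
    filter_upwards [eventually_ge_atTop 1] with j hj1
    have hQj : 1 ≤ Q*j := Nat.one_le_iff_ne_zero.2 (Nat.mul_ne_zero (by omega) (by omega))
    have hjQj : j ≤ Q*j := Nat.le_mul_of_pos_left j (by omega)
    rw [hMratio (Q*j) hQj, hMratio j hj1, ← Real.exp_sub]
    have hd : q (Q*j-1) - q (j-1) ≤ 2*(L (Q*j) - L j) := by
      have h := hqupdiff (j-1) (Q*j-1) (by omega)
      rwa [Nat.sub_add_cancel hQj, Nat.sub_add_cancel hj1] at h
    have h5 : ν (Q*j) / ν j ≤ b₁^2 * (((Q*j:ℕ):ℝ)/((j:ℕ):ℝ))^β := by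
      rw [div_le_iff₀ (hνpos j)]
      exact hLν j (Q*j) hj1 hjQj
    have hQQ : (((Q*j:ℕ):ℝ)/((j:ℕ):ℝ)) = ((Q:ℕ):ℝ) := by
      have hjne : ((j:ℕ):ℝ) ≠ 0 := Nat.cast_ne_zero.2 (by omega)
      push_cast
      rw [mul_div_assoc, div_self hjne, mul_one]
    rw [hQQ] at h5
    have hνnn : (0:ℝ) ≤ ν (Q*j) / ν j := div_nonneg (hνpos _).le (hνpos _).le
    calc Real.exp (q (Q*j-1) - q (j-1))
        ≤ Real.exp (((2:ℕ):ℝ)*(L (Q*j) - L j)) := by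
          refine Real.exp_le_exp.2 ?_
          push_cast
          linarith
      _ = (ν (Q*j) / ν j)^2 := by
          rw [Real.exp_nat_mul, Real.exp_sub, hexpL, hexpL]
      _ ≤ (b₁^2 * ((Q:ℕ):ℝ)^β)^2 := pow_le_pow_left₀ hνnn h5 2
  -- events in terms of E and SN
  have hevdown : ∀ A : ℝ, ∀ n₀ : ℕ, ∃ m, n₀ ≤ m ∧ E m ≤ -A ∧ SN m ≤ -A*((m:ℝ)+1) := by
    intro A n₀
    obtain ⟨m, h1, h2, h3⟩ := oscState.events_down hLm hLtop A n₀
    exact ⟨m, h1, by rw [hEdef]; exact h2, by rw [hSNdef]; exact h3⟩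
  have hevup : ∀ A : ℝ, ∀ n₀ : ℕ, ∃ m, n₀ ≤ m ∧ A ≤ E m ∧ A*((m:ℝ)+1) ≤ SN m := by
    intro A n₀
    obtain ⟨m, h1, h2, h3⟩ := oscState.events_up hLm hLtop A n₀
    exact ⟨m, h1, by rw [hEdef]; exact h2, by rw [hSNdef]; exact h3⟩
  have hqm : ∀ m : ℕ, q m = L (m+1) + E m := fun m => by rw [hqdef]
  -- (c) lower
  have hclo : ∀ ε : ℝ, 0 < ε → ∃ᶠ p : ℕ in atTop,
      (M p / M (p-1)) / (N p / N (p-1)) < ε := by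
    intro ε hε
    rw [frequently_atTop]
    intro a
    obtain ⟨m, hma, hE, hS⟩ := hevdown (max 1 (1 - Real.log ε)) a
    refine ⟨m+1, by omega, ?_⟩
    rw [hMratio (m+1) (by omega), hνratio]
    simp only [Nat.add_sub_cancel]
    rw [hqm m, ← hexpL (m+1), Real.exp_add, mul_comm,
      mul_div_assoc, div_self (Real.exp_pos _).ne', mul_one]
    have hElt : E m < Real.log ε := by
      have h1 : -(max 1 (1 - Real.log ε)) ≤ Real.log ε - 1 := by
        have := le_max_right (1:ℝ) (1 - Real.log ε); linarith
      linarith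
    calc Real.exp (E m) < Real.exp (Real.log ε) := Real.exp_lt_exp.2 hElt
      _ = ε := Real.exp_log hε
  -- (c) upper
  have hchi : ∀ K : ℝ, ∃ᶠ p : ℕ in atTop,
      K < (M p / M (p-1)) / (N p / N (p-1)) := by
    intro K
    rw [frequently_atTop]
    intro a
    obtain ⟨m, hma, hE, hS⟩ := hevup (Real.log (max K 1) + 1) a
    refine ⟨m+1, by omega, ?_⟩
    rw [hMratio (m+1) (by omega), hνratio]
    simp only [Nat.add_sub_cancel]
    rw [hqm m, ← hexpL (m+1), Real.exp_add, mul_comm,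
      mul_div_assoc, div_self (Real.exp_pos _).ne', mul_one]
    have h1 : K ≤ max K 1 := le_max_left _ _
    have h2 : (0:ℝ) < max K 1 := lt_of_lt_of_le one_pos (le_max_right _ _)
    calc K ≤ max K 1 := h1
      _ = Real.exp (Real.log (max K 1)) := (Real.exp_log h2).symm
      _ < Real.exp (Real.log (max K 1) + 1) := Real.exp_lt_exp.2 (by linarith)
      _ ≤ Real.exp (E m) := Real.exp_le_exp.2 hE
  -- (d) lower
  have hdlo : ∀ ε : ℝ, 0 < ε → ∃ᶠ p : ℕ in atTop, (M p / N p) ^ (1/(p:ℝ)) < ε := by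
    intro ε hε
    rw [frequently_atTop]
    intro a
    obtain ⟨m, hma, hE, hS⟩ := hevdown (max 1 (1 - Real.log ε)) a
    refine ⟨m+1, by omega, ?_⟩
    rw [hMN m, Real.rpow_def_of_pos (Real.exp_pos _), Real.log_exp]
    have hp : (0:ℝ) < ((m+1:ℕ):ℝ) := by positivity
    have hmul : SN m * (1/((m+1:ℕ):ℝ)) ≤ -(max 1 (1 - Real.log ε)) := by
      rw [mul_one_div, div_le_iff₀ hp]
      push_cast
      linarith
    have h1 : -(max 1 (1 - Real.log ε)) ≤ Real.log ε - 1 := by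
      have := le_max_right (1:ℝ) (1 - Real.log ε); linarith
    calc Real.exp (SN m * (1/((m+1:ℕ):ℝ)))
        ≤ Real.exp (Real.log ε - 1) := Real.exp_le_exp.2 (by linarith)
      _ < Real.exp (Real.log ε) := Real.exp_lt_exp.2 (by linarith)
      _ = ε := Real.exp_log hε
  -- (d) upper
  have hdhi : ∀ K : ℝ, ∃ᶠ p : ℕ in atTop, K < (M p / N p) ^ (1/(p:ℝ)) := by
    intro K
    rw [frequently_atTop]
    intro a
    obtain ⟨m, hma, hE, hS⟩ := hevup (Real.log (max K 1) + 1) a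
    refine ⟨m+1, by omega, ?_⟩
    rw [hMN m, Real.rpow_def_of_pos (Real.exp_pos _), Real.log_exp]
    have hp : (0:ℝ) < ((m+1:ℕ):ℝ) := by positivity
    have hmul : Real.log (max K 1) + 1 ≤ SN m * (1/((m+1:ℕ):ℝ)) := by
      rw [mul_one_div, le_div_iff₀ hp]
      push_cast
      linarith
    have h2 : (0:ℝ) < max K 1 := lt_of_lt_of_le one_pos (le_max_right _ _)
    calc K ≤ max K 1 := le_max_left _ _
      _ = Real.exp (Real.log (max K 1)) := (Real.exp_log h2).symm
      _ < Real.exp (Real.log (max K 1) + 1) := Real.exp_lt_exp.2 (by linarith)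
      _ ≤ Real.exp (SN m * (1/((m+1:ℕ):ℝ))) := Real.exp_le_exp.2 hmul
  -- not preceq
  have hnotMN : ¬ seqPreceq M N := by
    rintro ⟨C, hC1, hC⟩
    obtain ⟨p, hp1, hp2⟩ := frequently_atTop.1 (hdhi C) 1
    have hpne : ((p:ℝ)) ≠ 0 := Nat.cast_ne_zero.2 (by omega)
    have hle : (M p / N p)^(1/(p:ℝ)) ≤ C := by
      have h1 : M p / N p ≤ C^p := by
        rw [div_le_iff₀ (hNpos p)]
        calc M p ≤ C^p * N p := hC p
          _ = C^p * N p := rfl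
      have h2 : (M p / N p)^(1/(p:ℝ)) ≤ ((C:ℝ)^p)^(1/(p:ℝ)) :=
        Real.rpow_le_rpow (div_nonneg (hMpos p).le (hNpos p).le) h1 (by positivity)
      rwa [← Real.rpow_natCast C p, ← Real.rpow_mul (by linarith : (0:ℝ) ≤ C),
        mul_one_div_cancel hpne, Real.rpow_one] at h2
    linarith
  have hnotNM : ¬ seqPreceq N M := by
    rintro ⟨C, hC1, hC⟩
    have hCpos : (0:ℝ) < C := by linarith
    obtain ⟨p, hp1, hp2⟩ := frequently_atTop.1 (hdlo (1/C) (by positivity)) 1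
    have hpne : ((p:ℝ)) ≠ 0 := Nat.cast_ne_zero.2 (by omega)
    have hge : (1:ℝ)/C ≤ (M p / N p)^(1/(p:ℝ)) := by
      have h1 : ((1:ℝ)/C)^p ≤ M p / N p := by
        rw [div_pow, one_pow, div_le_div_iff₀ (by positivity : (0:ℝ) < C^p) (hNpos p), one_mul]
        calc N p ≤ C^p * M p := hC p
          _ = M p * C^p := by ring
      have h2 : (((1:ℝ)/C)^p)^(1/(p:ℝ)) ≤ (M p / N p)^(1/(p:ℝ)) :=
        Real.rpow_le_rpow (by positivity) h1 (by positivity)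
      rwa [← Real.rpow_natCast ((1:ℝ)/C) p, ← Real.rpow_mul (by positivity),
        mul_one_div_cancel hpne, Real.rpow_one] at h2
    linarith
  exact ⟨M, hMlc, hcondM2, hblow, hbup, hclo, hchi, hdlo, hdhi, hnotMN, hnotNM⟩
end

section
/- Let ω be a general weight function. If t² = O(ω(t)) as t→∞, then the Beurling Gelfand–Shilov class is trivial: S_{(ω)}(ℝ^d) = {0} for every dimension d∈ℕ. If t² = o(ω(t)) as t→∞, then the Roumieu class is trivial: S_{{ω}}(ℝ^d) = {0} for every dimension d∈ℕ. -/
open Filter Asymptotics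

noncomputable section GSAux

open Filter

/-! ### Elementary numeric lemmas -/

private lemma GS_pow_div_factorial_le_exp {y : ℝ} (hy : 0 ≤ y) (n : ℕ) :
    y ^ n / n.factorial ≤ Real.exp y := by
  have h1 : y ^ n / n.factorial ≤ ∑ i ∈ Finset.range (n + 1), y ^ i / i.factorial := by
    have := Finset.single_le_sum (f := fun i : ℕ => y ^ i / i.factorial)
      (fun i _ => by positivity) (Finset.self_mem_range_succ n)
    simpa using this
  exact h1.trans (Real.sum_le_exp_of_nonneg hy (n + 1))

private lemma GS_sqrt_pow_le {x : ℝ} (hx : 0 ≤ x) {n : ℕ} (hn : n ≠ 0) :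
    (x / Real.sqrt n) ^ n ≤ Real.exp (x ^ 2 / 2) := by
  have hnpos : (0 : ℝ) < n := by exact_mod_cast Nat.pos_of_ne_zero hn
  have hs : (0 : ℝ) < Real.sqrt n := Real.sqrt_pos.2 hnpos
  have ha : 0 ≤ x / Real.sqrt n := div_nonneg hx hs.le
  refine le_of_pow_le_pow_left₀ two_ne_zero (Real.exp_pos _).le ?_
  have h1 : ((x / Real.sqrt n) ^ n) ^ 2 = (x ^ 2 / n) ^ n := by
    rw [← pow_mul, mul_comm n 2, pow_mul, div_pow, Real.sq_sqrt hnpos.le]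
  have h2 : (Real.exp (x ^ 2 / 2)) ^ 2 = Real.exp (x ^ 2) := by
    rw [← Real.exp_nat_mul]; congr 1; push_cast; ring
  rw [h1, h2]
  have h3 : x ^ 2 / n ≤ Real.exp (x ^ 2 / n) := by
    have := Real.add_one_le_exp (x ^ 2 / n - 1)
    have h4 : Real.exp (x ^ 2 / n - 1) ≤ Real.exp (x ^ 2 / n) := by
      apply Real.exp_le_exp.2; linarith
    linarith
  calc (x ^ 2 / n) ^ n ≤ (Real.exp (x ^ 2 / n)) ^ n :=
        pow_le_pow_left₀ (by positivity) h3 n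
    _ = Real.exp (x ^ 2) := by
        rw [← Real.exp_nat_mul, mul_div_cancel₀ _ hnpos.ne']

private lemma GS_exp_one_sq : Real.exp 1 ^ 2 ≤ (15:ℝ) / 2 := by
  have h := Real.exp_one_lt_d9
  nlinarith [Real.exp_pos 1]

private lemma GS_exp_third : Real.exp (1/3 : ℝ) ≤ 10 / 7 := by
  refine le_of_pow_le_pow_left₀ (n := 3) three_ne_zero (by norm_num) ?_
  have h1 : Real.exp (1/3 : ℝ) ^ (3:ℕ) = Real.exp 1 := by
    rw [← Real.exp_nat_mul]; norm_num
  rw [h1]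
  have h := Real.exp_one_lt_d9
  nlinarith

/-- The master coefficient bound. -/
private lemma GS_coef_bound {C R : ℝ} (hC : 0 ≤ C) (hR : 1 ≤ R) {t : ℝ} (ht : 0 ≤ t) (m : ℕ) :
    C * max R (Real.sqrt m / 10) ^ m * t ^ m / m.factorial ≤
      2 * C * Real.exp (2 * R * t + (3/20) * t ^ 2) * (1/2) ^ m := by
  have hexp1 : (1:ℝ) ≤ Real.exp (2 * R * t + (3/20) * t ^ 2) := by
    rw [← Real.exp_zero]; apply Real.exp_le_exp.2; positivity
  rcases Nat.eq_zero_or_pos m with hm | hm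
  · subst hm; simpa using by nlinarith
  have hmne : m ≠ 0 := hm.ne'
  have hmR : (0:ℝ) < m := by exact_mod_cast hm
  have hfac : (0:ℝ) < m.factorial := by exact_mod_cast m.factorial_pos
  have hsq : (0:ℝ) ≤ Real.sqrt m := Real.sqrt_nonneg _
  have hsqpos : (0:ℝ) < Real.sqrt m := Real.sqrt_pos.2 hmR
  have hmax : max R (Real.sqrt m / 10) ^ m ≤ R ^ m + (Real.sqrt m / 10) ^ m := by
    rcases max_cases R (Real.sqrt m / 10) with ⟨h, _⟩ | ⟨h, _⟩ <;> rw [h]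
    · nlinarith [pow_nonneg (by positivity : (0:ℝ) ≤ Real.sqrt m / 10) m]
    · nlinarith [pow_nonneg (by linarith : (0:ℝ) ≤ R) m]
  -- first piece
  have hb1 : R ^ m * t ^ m / m.factorial ≤ (1/2) ^ m * Real.exp (2 * R * t) := by
    have e1 : (1/2:ℝ) ^ m * (2 * R * t) ^ m = R ^ m * t ^ m := by
      rw [← mul_pow, show (1/2:ℝ) * (2 * R * t) = R * t by ring, mul_pow]
    have h1 : R ^ m * t ^ m / m.factorial = (1/2) ^ m * ((2 * R * t) ^ m / m.factorial) := by
      rw [← e1]; ring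
    rw [h1]
    exact mul_le_mul_of_nonneg_left
      (GS_pow_div_factorial_le_exp (y := 2 * R * t) (by positivity) m) (by positivity)
  -- second piece
  have hb2 : (Real.sqrt m / 10) ^ m * t ^ m / m.factorial ≤
      (1/2) ^ m * Real.exp ((3/20) * t ^ 2) := by
    have key : (Real.sqrt m) ^ m * (Real.sqrt m) ^ m ≤ Real.exp 1 ^ m * m.factorial := by
      have hmm : (Real.sqrt m) ^ m * (Real.sqrt m) ^ m = ((m:ℝ)) ^ m := by
        rw [← mul_pow, Real.mul_self_sqrt hmR.le]
      have hexpm : Real.exp 1 ^ m = Real.exp (m:ℝ) := by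
        rw [← Real.exp_nat_mul, mul_one]
      rw [hmm, hexpm]
      calc ((m:ℝ))^m = ((m:ℝ))^m / m.factorial * m.factorial := by field_simp
        _ ≤ Real.exp (m:ℝ) * m.factorial :=
            mul_le_mul_of_nonneg_right (GS_pow_div_factorial_le_exp (by positivity) m) hfac.le
    have h2 : (Real.sqrt m * (t/5)) ^ m / m.factorial
        ≤ (Real.exp 1 * (t/5) / Real.sqrt m) ^ m := by
      rw [div_pow, mul_pow, mul_pow, div_le_div_iff₀ hfac (pow_pos hsqpos m)]
      have h3 := mul_le_mul_of_nonneg_right key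
        (pow_nonneg (by positivity : (0:ℝ) ≤ t/5) m)
      nlinarith [h3]
    have h4 : (Real.exp 1 * (t/5) / Real.sqrt m) ^ m ≤ Real.exp ((Real.exp 1 * (t/5)) ^ 2 / 2) :=
      GS_sqrt_pow_le (by positivity) hmne
    have h5 : Real.exp ((Real.exp 1 * (t/5)) ^ 2 / 2) ≤ Real.exp ((3/20) * t ^ 2) := by
      apply Real.exp_le_exp.2
      nlinarith [GS_exp_one_sq, sq_nonneg t, Real.exp_pos 1]
    have e2 : (1/2:ℝ) ^ m * (Real.sqrt m * (t/5)) ^ m = (Real.sqrt m / 10) ^ m * t ^ m := by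
      rw [← mul_pow, show (1/2:ℝ) * (Real.sqrt m * (t/5)) = (Real.sqrt m / 10) * t by ring,
        mul_pow]
    have h6 : (Real.sqrt m / 10) ^ m * t ^ m / m.factorial
        = (1/2) ^ m * ((Real.sqrt m * (t/5)) ^ m / m.factorial) := by
      rw [← e2]; ring
    rw [h6]
    exact mul_le_mul_of_nonneg_left ((h2.trans h4).trans h5) (by positivity)
  have hee : Real.exp (2*R*t) + Real.exp ((3/20)*t^2) ≤
      2 * Real.exp (2*R*t + (3/20)*t^2) := by
    have h1 : Real.exp (2*R*t) ≤ Real.exp (2*R*t + (3/20)*t^2) :=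
      Real.exp_le_exp.2 (by nlinarith)
    have h2 : Real.exp ((3/20)*t^2) ≤ Real.exp (2*R*t + (3/20)*t^2) :=
      Real.exp_le_exp.2 (by nlinarith)
    linarith
  calc C * max R (Real.sqrt m / 10) ^ m * t ^ m / m.factorial
      ≤ C * (R ^ m + (Real.sqrt m/10) ^ m) * t ^ m / m.factorial := by
        gcongr C * ?_ * t ^ m / (m.factorial : ℝ) <;> exact hmax
    _ = C * (R^m*t^m/m.factorial) + C * ((Real.sqrt m/10)^m*t^m/m.factorial) := by ring
    _ ≤ C * ((1/2)^m * Real.exp (2*R*t)) + C * ((1/2)^m * Real.exp ((3/20)*t^2)) := by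
        have := mul_le_mul_of_nonneg_left hb1 hC
        have := mul_le_mul_of_nonneg_left hb2 hC
        linarith
    _ = C * (1/2)^m * (Real.exp (2*R*t) + Real.exp ((3/20)*t^2)) := by ring
    _ ≤ C * (1/2)^m * (2 * Real.exp (2*R*t + (3/20)*t^2)) :=
        mul_le_mul_of_nonneg_left hee (by positivity)
    _ = 2 * C * Real.exp (2*R*t + (3/20)*t^2) * (1/2)^m := by ring

/-! ### iterated derivatives within a set -/

private lemma GS_idw {f : ℝ → ℝ} (hf : ContDiff ℝ (⊤ : ℕ∞) f) {s : Set ℝ}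
    (hs : UniqueDiffOn ℝ s) {x : ℝ} (hx : x ∈ s) (n : ℕ) :
    iteratedDerivWithin n f s x = iteratedDeriv n f x := by
  rw [iteratedDerivWithin_eq_iteratedFDerivWithin, iteratedDeriv_eq_iteratedFDeriv]
  have h1 : HasFTaylorSeriesUpTo (⊤ : ℕ∞) f (ftaylorSeries ℝ f) :=
    contDiff_iff_ftaylorSeries.mp hf
  have h2 := (h1.hasFTaylorSeriesUpToOn s).eq_iteratedFDerivWithin_of_uniqueDiffOn
    (m := n) (by exact_mod_cast le_top) hs hx
  have h3 := h1.eq_iteratedFDeriv (m := n) (by exact_mod_cast le_top) x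
  rw [← h2, ← h3]

/-! ### Taylor expansion with infinite radius -/

private lemma GS_summable_aux {C R : ℝ} (hC : 0 ≤ C) (hR : 1 ≤ R) {u : ℝ} (hu : 0 ≤ u) :
    Summable (fun n : ℕ => C * max R (Real.sqrt n / 10) ^ n * u ^ n / n.factorial) := by
  apply Summable.of_nonneg_of_le (fun n => by positivity)
    (fun n => GS_coef_bound hC hR hu n)
  exact (summable_geometric_of_lt_one (by norm_num) (by norm_num)).mul_left _

private lemma GS_taylor_nonneg (g : ℝ → ℝ) (hg : ContDiff ℝ (⊤ : ℕ∞) g) (C R : ℝ)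
    (hC : 0 ≤ C) (hR : 1 ≤ R)
    (H1 : ∀ (n : ℕ) (t : ℝ), |iteratedDeriv n g t| ≤ C * max R (Real.sqrt n / 10) ^ n)
    {t : ℝ} (ht : 0 ≤ t) :
    HasSum (fun n => iteratedDeriv n g 0 / n.factorial * t ^ n) (g t) := by
  have hmaxpos : ∀ n : ℕ, (0:ℝ) ≤ max R (Real.sqrt n / 10) := fun n =>
    le_trans (by linarith) (le_max_left _ _)
  have hsummable : Summable (fun n => iteratedDeriv n g 0 / n.factorial * t ^ n) := by
    apply Summable.of_norm_bounded (GS_summable_aux hC hR ht)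
    intro n
    have hfac : (0:ℝ) < n.factorial := by exact_mod_cast n.factorial_pos
    rw [Real.norm_eq_abs, abs_mul, abs_div, abs_pow, abs_of_nonneg ht]
    rw [abs_of_pos hfac]
    have := H1 n 0
    have h2 : |iteratedDeriv n g 0| / n.factorial ≤ C * max R (Real.sqrt n / 10) ^ n /
        n.factorial := by gcongr
    calc |iteratedDeriv n g 0| / n.factorial * t ^ n
        ≤ C * max R (Real.sqrt n / 10) ^ n / n.factorial * t ^ n := by
          exact mul_le_mul_of_nonneg_right h2 (pow_nonneg ht n)
      _ = C * max R (Real.sqrt n / 10) ^ n * t ^ n / n.factorial := by ring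
  rcases eq_or_lt_of_le ht with rfl | htpos
  · have h0 : HasSum (fun n => iteratedDeriv n g 0 / n.factorial * (0:ℝ) ^ n)
        (iteratedDeriv 0 g 0 / (Nat.factorial 0) * (0:ℝ) ^ (0:ℕ)) := by
      apply hasSum_single
      intro b hb
      simp [zero_pow hb]
    simpa [iteratedDeriv_zero] using h0
  -- t > 0
  have hIcc : UniqueDiffOn ℝ (Set.Icc 0 t) := uniqueDiffOn_Icc htpos
  have h0mem : (0:ℝ) ∈ Set.Icc (0:ℝ) t := Set.left_mem_Icc.2 ht
  have key : ∀ n : ℕ, |g t - ∑ k ∈ Finset.range (n+1),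
      iteratedDeriv k g 0 / k.factorial * t ^ k|
      ≤ C * max R (Real.sqrt ((n+1 : ℕ)) / 10) ^ (n+1) * t ^ (n+1) / (n+1).factorial := by
    intro n
    have hcd : ContDiffOn ℝ n g (Set.Icc 0 t) :=
      (hg.of_le (by exact_mod_cast le_top)).contDiffOn
    have hdd : Differentiable ℝ (iteratedDeriv n g) :=
      hg.differentiable_iteratedDeriv n (by exact_mod_cast ENat.coe_lt_top n)
    have hdiff : DifferentiableOn ℝ (iteratedDerivWithin n g (Set.Icc 0 t)) (Set.Ioo 0 t) :=
      (hdd.differentiableOn).congr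
        (fun x hx => GS_idw hg hIcc (Set.Ioo_subset_Icc_self hx) n)
    have hlag := taylor_mean_remainder_lagrange (f := g) (x₀ := 0) (x := t) (n := n) htpos.ne
      (by rw [Set.uIcc_of_le ht]; exact hcd) (by rw [Set.uIcc_of_le ht, Set.uIoo_of_le ht]; exact hdiff)
    rw [Set.uIcc_of_le ht, Set.uIoo_of_le ht] at hlag
    obtain ⟨x', hx', heq⟩ := hlag
    have htay : taylorWithinEval g n (Set.Icc 0 t) 0 t
        = ∑ k ∈ Finset.range (n+1), iteratedDeriv k g 0 / k.factorial * t ^ k := by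
      rw [taylor_within_apply]
      apply Finset.sum_congr rfl
      intro k _
      rw [GS_idw hg hIcc h0mem k]
      rw [smul_eq_mul]
      field_simp
      ring
    rw [htay] at heq
    rw [heq]
    rw [GS_idw hg hIcc (Set.Ioo_subset_Icc_self hx') (n+1)]
    rw [sub_zero, abs_div, abs_mul, abs_pow, abs_of_pos htpos]
    have hfc : |((n+1).factorial : ℝ)| = ((n+1).factorial : ℝ) := by
      rw [abs_of_pos]; exact_mod_cast (n+1).factorial_pos
    rw [hfc]
    gcongr
    exact H1 (n+1) x'
  -- conclude
  have hK : (0:ℝ) ≤ 2 * C * Real.exp (2*R*t + (3/20)*t^2) := by positivity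
  have hlim : Tendsto (fun n : ℕ => C * max R (Real.sqrt ((n+1 : ℕ)) / 10) ^ (n+1) * t ^ (n+1) /
      (n+1).factorial) atTop (nhds 0) := by
    apply squeeze_zero (fun n => by positivity)
      (fun n => GS_coef_bound hC hR ht (n+1))
    have hgeo : Tendsto (fun n : ℕ => 2 * C * Real.exp (2*R*t + (3/20)*t^2) * (1/2:ℝ) ^ n)
        atTop (nhds 0) := by
      have := (tendsto_pow_atTop_nhds_zero_of_lt_one (by norm_num : (0:ℝ) ≤ 1/2)
        (by norm_num)).const_mul (2 * C * Real.exp (2*R*t + (3/20)*t^2))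
      simpa using this
    exact hgeo.comp (tendsto_add_atTop_nat 1)
  have hS : Tendsto (fun n : ℕ => ∑ k ∈ Finset.range (n+1),
      iteratedDeriv k g 0 / k.factorial * t ^ k) atTop (nhds (g t)) := by
    rw [tendsto_iff_dist_tendsto_zero]
    apply squeeze_zero (fun n => dist_nonneg) _ hlim
    intro n
    rw [Real.dist_eq, abs_sub_comm]
    exact key n
  have hS2 := hsummable.hasSum.tendsto_sum_nat.comp (tendsto_add_atTop_nat 1)
  have : (∑' n, iteratedDeriv n g 0 / n.factorial * t ^ n) = g t :=
    tendsto_nhds_unique hS2 hS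
  exact this ▸ hsummable.hasSum

private lemma GS_taylor (g : ℝ → ℝ) (hg : ContDiff ℝ (⊤ : ℕ∞) g) (C R : ℝ)
    (hC : 0 ≤ C) (hR : 1 ≤ R)
    (H1 : ∀ (n : ℕ) (t : ℝ), |iteratedDeriv n g t| ≤ C * max R (Real.sqrt n / 10) ^ n)
    (t : ℝ) :
    HasSum (fun n => iteratedDeriv n g 0 / n.factorial * t ^ n) (g t) := by
  rcases le_or_gt 0 t with ht | ht
  · exact GS_taylor_nonneg g hg C R hC hR H1 ht
  · have hneg : ContDiff ℝ (⊤ : ℕ∞) (fun s : ℝ => g (-s)) := hg.comp contDiff_neg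
    have Hneg : ∀ (n : ℕ) (s : ℝ),
        |iteratedDeriv n (fun s : ℝ => g (-s)) s| ≤ C * max R (Real.sqrt n / 10) ^ n := by
      intro n s
      rw [iteratedDeriv_comp_neg]
      rw [smul_eq_mul, abs_mul, abs_pow, abs_neg, abs_one, one_pow, one_mul]
      exact H1 n (-s)
    have h := GS_taylor_nonneg (fun s : ℝ => g (-s)) hneg C R hC hR Hneg
      (t := -t) (by linarith)
    simp only [neg_neg] at h
    have heq : ∀ n : ℕ, iteratedDeriv n (fun s : ℝ => g (-s)) 0 / n.factorial * (-t) ^ n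
        = iteratedDeriv n g 0 / n.factorial * t ^ n := by
      intro n
      rw [iteratedDeriv_comp_neg, neg_zero, smul_eq_mul, neg_pow t n]
      have hone : ((-1:ℝ)) ^ n * ((-1:ℝ)) ^ n = 1 := by
        rw [← pow_add]
        exact Even.neg_one_pow ⟨n, rfl⟩
      linear_combination (iteratedDeriv n g 0 / n.factorial * t ^ n) * hone
    exact (funext heq : _) ▸ h

/-! ### The Phragmén–Lindelöf sector argument -/

open Complex in
private lemma GS_sector (H : ℂ → ℂ) (hd : Differentiable ℂ H) (D K : ℝ) (hD : 0 ≤ D)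
    (hK : 0 ≤ K) (a b : ℝ) (hab : b - a = 3 * Real.pi / 8)
    (hgrow : ∀ z : ℂ, ‖H z‖ ≤ K * Real.exp (2 * ‖z‖ ^ 2))
    (ha : ∀ r : ℝ, ‖H (Complex.exp (r + a * I))‖ ≤ D)
    (hb : ∀ r : ℝ, ‖H (Complex.exp (r + b * I))‖ ≤ D) :
    ∀ w : ℂ, a ≤ w.im → w.im ≤ b → ‖H (Complex.exp w)‖ ≤ D := by
  intro w hwa hwb
  have hπ := Real.pi_pos
  refine PhragmenLindelof.horizontal_strip (f := fun z => H (Complex.exp z))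
    ((hd.comp Complex.differentiable_exp).diffContOnCl) ?_ ?_ ?_ hwa hwb
  · refine ⟨2, ?_, 2, ?_⟩
    · rw [hab]
      rw [show Real.pi / (3 * Real.pi / 8) = 8/3 by field_simp]
      norm_num
    · apply Asymptotics.IsBigO.of_bound K
      filter_upwards with z
      have h1 : ‖H (Complex.exp z)‖ ≤ K * Real.exp (2 * Real.exp (2 * |z.re|)) := by
        refine (hgrow (Complex.exp z)).trans ?_
        have h2 : ‖Complex.exp z‖ ^ 2 = Real.exp (2 * z.re) := by
          rw [Complex.norm_exp, ← Real.exp_nat_mul]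
          norm_num
        rw [h2]
        have h5 : Real.exp (2 * Real.exp (2 * z.re)) ≤ Real.exp (2 * Real.exp (2 * |z.re|)) := by
          apply Real.exp_le_exp.2
          have h6 : Real.exp (2 * z.re) ≤ Real.exp (2 * |z.re|) :=
            Real.exp_le_exp.2 (by linarith [le_abs_self z.re])
          linarith
        exact mul_le_mul_of_nonneg_left h5 hK
      refine h1.trans ?_
      rw [Real.norm_eq_abs, Real.abs_exp]
  · intro z hz
    have : z = (z.re : ℂ) + a * I := by
      conv_lhs => rw [← Complex.re_add_im z]
      rw [hz]
    rw [this]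
    exact ha z.re
  · intro z hz
    have : z = (z.re : ℂ) + b * I := by
      conv_lhs => rw [← Complex.re_add_im z]
      rw [hz]
    rw [this]
    exact hb z.re

open Complex in
private lemma GS_re_sq (z : ℂ) :
    (z ^ 2).re = ‖z‖ ^ 2 * Real.cos (2 * Complex.arg z) := by
  conv_lhs => rw [← Complex.norm_mul_exp_arg_mul_I z]
  rw [mul_pow, ← Complex.ofReal_pow]
  rw [show (Complex.exp (Complex.arg z * I)) ^ 2 = Complex.exp ((2 * Complex.arg z : ℝ) * I) by
    rw [← Complex.exp_nat_mul]; push_cast; ring_nf]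
  rw [Complex.re_ofReal_mul, Complex.exp_ofReal_mul_I_re]

private lemma GS_cos_mid {θ : ℝ} (h1 : 3 * Real.pi / 8 < |θ|) (h2 : |θ| < 5 * Real.pi / 8) :
    Real.cos (2 * θ) ≤ -(1/2) := by
  have hπ := Real.pi_pos
  have hc : Real.cos (2 * θ) = Real.cos (2 * |θ|) := by
    rcases abs_cases θ with ⟨h, _⟩ | ⟨h, _⟩
    · rw [h]
    · rw [h]; rw [show 2 * -θ = -(2*θ) by ring, Real.cos_neg]
  rw [hc]
  set u := Real.pi - 2 * |θ| with hu
  have h3 : Real.cos (2 * |θ|) = - Real.cos u := by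
    rw [show 2 * |θ| = Real.pi - u by rw [hu]; ring, Real.cos_pi_sub]
  have h4 : |u| ≤ Real.pi / 3 := by
    rw [abs_le]
    constructor <;> [skip; skip] <;> rw [hu] <;> nlinarith
  have h5 : (1:ℝ)/2 ≤ Real.cos u := by
    rw [← Real.cos_pi_div_three, ← Real.cos_abs u]
    exact Real.cos_le_cos_of_nonneg_of_le_pi (abs_nonneg u) (by linarith) h4
  rw [h3]
  linarith


/-! ### Core main argument -/

set_option maxHeartbeats 2000000

open Complex in
private lemma GS_core_main (g : ℝ → ℝ) (hg : ContDiff ℝ (⊤ : ℕ∞) g) (C R : ℝ)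
    (hC : 0 ≤ C) (hR : 1 ≤ R)
    (H1 : ∀ (n : ℕ) (t : ℝ), |iteratedDeriv n g t| ≤ C * max R (Real.sqrt n / 10) ^ n)
    (D : ℝ) (hD0 : 0 < D) (hD4C : 4 * C * Real.exp (100 * R ^ 2) ≤ D)
    (gdecay : ∀ t : ℝ, |g t| ≤ D * Real.exp (-12 * t ^ 2)) :
    ∀ t : ℝ, g t = 0 := by
  have hπ := Real.pi_pos
  set a : ℕ → ℝ := fun n => iteratedDeriv n g 0 / n.factorial with ha
  have hacoef : ∀ n : ℕ, |a n| ≤ C * max R (Real.sqrt n / 10) ^ n / n.factorial := by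
    intro n
    have hfac : (0:ℝ) < n.factorial := by exact_mod_cast n.factorial_pos
    rw [ha]
    simp only []
    rw [abs_div, abs_of_pos hfac]
    gcongr
    exact H1 n 0
  have hcb : ∀ u : ℝ, 0 ≤ u → ∀ n : ℕ,
      |a n| * u ^ n ≤ 2*C*Real.exp (2*R*u + (3/20)*u^2) * (1/2) ^ n := by
    intro u hu n
    calc |a n| * u ^ n
        ≤ C * max R (Real.sqrt n/10) ^ n / n.factorial * u ^ n :=
          mul_le_mul_of_nonneg_right (hacoef n) (pow_nonneg hu n)
      _ = C * max R (Real.sqrt n/10) ^ n * u ^ n / n.factorial := by ring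
      _ ≤ _ := GS_coef_bound hC hR hu n
  set p : FormalMultilinearSeries ℂ ℂ ℂ :=
    fun n => ContinuousMultilinearMap.mkPiRing ℂ (Fin n) ((a n : ℂ)) with hp
  have hpnorm : ∀ n, ‖p n‖ ≤ |a n| := by
    intro n
    rw [hp]
    rw [ContinuousMultilinearMap.norm_mkPiRing, Complex.norm_real, Real.norm_eq_abs]
  have hgeo : Summable (fun n : ℕ => (1/2:ℝ)^n) :=
    summable_geometric_of_lt_one (by norm_num) (by norm_num)
  have hsumnorm : ∀ r : NNReal, Summable fun n => ‖p n‖ * (r:ℝ)^n := by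
    intro r
    apply Summable.of_nonneg_of_le (fun n => by positivity) (fun n => ?_)
      (hgeo.mul_left (2*C*Real.exp (2*R*r + (3/20)*(r:ℝ)^2)))
    calc ‖p n‖ * (r:ℝ)^n ≤ |a n| * (r:ℝ)^n :=
          mul_le_mul_of_nonneg_right (hpnorm n) (by positivity)
      _ ≤ _ := hcb r r.coe_nonneg n
  have hrad : p.radius = ⊤ := p.radius_eq_top_of_summable_norm hsumnorm
  have hball : HasFPowerSeriesOnBall p.sum p 0 ⊤ := by
    have := p.hasFPowerSeriesOnBall (by rw [hrad]; exact ENNReal.zero_lt_top)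
    rwa [hrad] at this
  set G := p.sum with hGdef
  have hGsum : ∀ z : ℂ, HasSum (fun n => (a n : ℂ) * z ^ n) (G z) := by
    intro z
    have hmem : z ∈ EMetric.ball (0:ℂ) p.radius := by
      rw [hrad]; exact EMetric.mem_ball.mpr (edist_lt_top z 0)
    have hterm : (fun n => p n fun _ => z) = fun n => (a n : ℂ) * z ^ n := by
      funext n
      rw [hp]
      rw [ContinuousMultilinearMap.mkPiRing_apply, Finset.prod_const, smul_eq_mul]
      simp [mul_comm]
    have := p.hasSum hmem
    rwa [hterm] at this
  have hGdiff : Differentiable ℂ G := by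
    intro z
    have hmem : z ∈ EMetric.ball (0:ℂ) (⊤:ENNReal) := EMetric.mem_ball.mpr (edist_lt_top z 0)
    exact (hball.differentiableOn.differentiableAt (EMetric.isOpen_ball.mem_nhds hmem))
  have hnsum : ∀ z : ℂ, Summable (fun n => ‖(a n:ℂ) * z^n‖) := by
    intro z
    apply Summable.of_nonneg_of_le (fun n => norm_nonneg _) (fun n => ?_)
      (hgeo.mul_left (2*C*Real.exp (2*R*(‖z‖) + (3/20)*(‖z‖)^2)))
    rw [norm_mul, Complex.norm_real, Real.norm_eq_abs, norm_pow]
    exact hcb _ (norm_nonneg z) n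
  have hGnorm : ∀ z : ℂ, ‖G z‖ ≤ D * Real.exp ((4/25) * ‖z‖ ^ 2) := by
    intro z
    set r : ℝ := ‖z‖ with hrdef
    have hr0 : 0 ≤ r := norm_nonneg z
    have h1 : ‖G z‖ ≤ ∑' n, ‖(a n:ℂ) * z^n‖ := by
      rw [← (hGsum z).tsum_eq]
      exact norm_tsum_le_tsum_norm (hnsum z)
    have h2 : ∑' n, ‖(a n:ℂ) * z^n‖
        ≤ ∑' n : ℕ, (2*C*Real.exp (2*R*r + (3/20)*r^2)) * (1/2:ℝ)^n := by
      apply Summable.tsum_le_tsum _ (hnsum z) (hgeo.mul_left _)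
      intro n
      rw [norm_mul, Complex.norm_real, Real.norm_eq_abs, norm_pow]
      exact hcb r hr0 n
    have h3 : ∑' n : ℕ, (2*C*Real.exp (2*R*r + (3/20)*r^2)) * (1/2:ℝ)^n
        = 4*C*Real.exp (2*R*r + (3/20)*r^2) := by
      rw [tsum_mul_left, tsum_geometric_of_lt_one (by norm_num) (by norm_num)]
      norm_num
      ring
    have h4 : 4*C*Real.exp (2*R*r + (3/20)*r^2) ≤ D * Real.exp ((4/25)*r^2) := by
      calc 4*C*Real.exp (2*R*r + (3/20)*r^2)
          ≤ 4*C*(Real.exp (100*R^2) * Real.exp ((4/25)*r^2)) := by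
            apply mul_le_mul_of_nonneg_left _ (by positivity : (0:ℝ) ≤ 4*C)
            rw [← Real.exp_add]
            apply Real.exp_le_exp.2
            nlinarith [sq_nonneg (10*R - r/10)]
        _ = (4*C*Real.exp (100*R^2)) * Real.exp ((4/25)*r^2) := by ring
        _ ≤ D * Real.exp ((4/25)*r^2) :=
            mul_le_mul_of_nonneg_right hD4C (Real.exp_pos _).le
    exact h1.trans ((h2.trans_eq h3).trans h4)
  have hGreal : ∀ t : ℝ, G ((t:ℝ):ℂ) = ((g t : ℝ) : ℂ) := by
    intro t
    have h1 := GS_taylor g hg C R hC hR H1 t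
    have h4 : (fun n : ℕ => Complex.ofRealCLM (iteratedDeriv n g 0 / n.factorial * t ^ n))
        = fun n : ℕ => (a n:ℂ) * ((t:ℝ):ℂ)^n := by
      funext n
      rw [ha]
      simp only [Complex.ofRealCLM_apply]
      push_cast
      ring
    have h2 : HasSum (fun n => (a n : ℂ) * ((t:ℝ):ℂ)^n) ((g t : ℝ):ℂ) := by
      have h3 := h1.mapL Complex.ofRealCLM
      rwa [h4] at h3
    exact (hGsum ((t:ℝ):ℂ)).unique h2
  set H : ℂ → ℂ := fun z => G z * Complex.exp (z^2) with hHdef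
  have hHdiff : Differentiable ℂ H :=
    hGdiff.mul (Complex.differentiable_exp.comp (differentiable_pow 2))
  have hHnorm : ∀ z, ‖H z‖ = ‖G z‖ * Real.exp ((z^2).re) := by
    intro z
    rw [hHdef]
    simp only []
    rw [norm_mul, Complex.norm_exp]
  have hHgrow : ∀ z, ‖H z‖ ≤ D * Real.exp (2 * ‖z‖ ^ 2) := by
    intro z
    rw [hHnorm z]
    have h1 : (z^2).re ≤ ‖z‖^2 := by
      calc (z^2).re ≤ ‖z^2‖ := Complex.re_le_norm _
        _ = ‖z‖ ^ 2 := norm_pow _ _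
    calc ‖G z‖ * Real.exp ((z^2).re)
        ≤ (D * Real.exp ((4/25)*‖z‖^2)) * Real.exp (‖z‖^2) :=
          mul_le_mul (hGnorm z) (Real.exp_le_exp.2 h1) (Real.exp_pos _).le (by positivity)
      _ = D * Real.exp ((4/25)*‖z‖^2 + ‖z‖^2) := by
          rw [mul_assoc, ← Real.exp_add]
      _ ≤ D * Real.exp (2*‖z‖^2) := by
          apply mul_le_mul_of_nonneg_left _ hD0.le
          apply Real.exp_le_exp.2
          nlinarith [sq_nonneg (‖z‖)]
  have hHkey : ∀ z : ℂ, (z^2).re ≤ -(1/2) * ‖z‖^2 → ‖H z‖ ≤ D := by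
    intro z hz
    rw [hHnorm z]
    calc ‖G z‖ * Real.exp ((z^2).re)
        ≤ (D * Real.exp ((4/25)*‖z‖^2)) * Real.exp (-(1/2)*‖z‖^2) :=
          mul_le_mul (hGnorm z) (Real.exp_le_exp.2 hz) (Real.exp_pos _).le (by positivity)
      _ = D * Real.exp ((4/25)*‖z‖^2 + -(1/2)*‖z‖^2) := by
          rw [mul_assoc, ← Real.exp_add]
      _ ≤ D * 1 := by
          apply mul_le_mul_of_nonneg_left _ hD0.le
          rw [Real.exp_le_one_iff]
          nlinarith [sq_nonneg (‖z‖)]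
      _ = D := mul_one D
  have hHreal : ∀ x : ℝ, ‖H ((x:ℝ):ℂ)‖ ≤ D := by
    intro x
    rw [hHnorm]
    have h1 : ((((x:ℝ):ℂ))^2).re = x^2 := by
      rw [← Complex.ofReal_pow, Complex.ofReal_re]
    rw [h1]
    have h2 : ‖G ((x:ℝ):ℂ)‖ = |g x| := by
      rw [hGreal x, Complex.norm_real, Real.norm_eq_abs]
    rw [h2]
    calc |g x| * Real.exp (x^2)
        ≤ (D * Real.exp (-12*x^2)) * Real.exp (x^2) :=
          mul_le_mul_of_nonneg_right (gdecay x) (Real.exp_pos _).le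
      _ = D * Real.exp (-12*x^2 + x^2) := by rw [mul_assoc, ← Real.exp_add]
      _ ≤ D * 1 := mul_le_mul_of_nonneg_left
          (Real.exp_le_one_iff.2 (by nlinarith [sq_nonneg x])) hD0.le
      _ = D := mul_one D
  have hHray : ∀ θ : ℝ, Real.cos (2*θ) ≤ -(1/2) →
      ∀ r : ℝ, ‖H (Complex.exp ((r:ℝ) + (θ:ℝ) * Complex.I))‖ ≤ D := by
    intro θ hθ r
    apply hHkey
    set z := Complex.exp (((r:ℝ):ℂ) + ((θ:ℝ):ℂ) * Complex.I) with hz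
    have habs : ‖z‖ = Real.exp r := by
      rw [hz, Complex.norm_exp]
      congr 1
      simp
    have hre : (z^2).re = Real.exp (2*r) * Real.cos (2*θ) := by
      rw [hz, sq, ← Complex.exp_add, Complex.exp_re]
      congr 1
      · congr 1
        simp
        ring
      · simp
        ring
    rw [hre, habs]
    have h2 : (Real.exp r)^2 = Real.exp (2*r) := by
      rw [← Real.exp_nat_mul]
      norm_num
    rw [h2]
    calc Real.exp (2*r) * Real.cos (2*θ) ≤ Real.exp (2*r) * (-(1/2)) :=
          mul_le_mul_of_nonneg_left hθ (Real.exp_pos _).le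
      _ = -(1/2) * Real.exp (2*r) := by ring
  have hray0 : ∀ r : ℝ, ‖H (Complex.exp (((r:ℝ):ℂ) + ((0:ℝ):ℂ) * Complex.I))‖ ≤ D := by
    intro r
    rw [show (((r:ℝ):ℂ) + ((0:ℝ):ℂ) * Complex.I) = ((r:ℝ):ℂ) by simp]
    rw [← Complex.ofReal_exp]
    exact hHreal (Real.exp r)
  have hrayπ : ∀ r : ℝ, ‖H (Complex.exp (((r:ℝ):ℂ) + ((Real.pi:ℝ):ℂ) * Complex.I))‖ ≤ D := by
    intro r
    rw [Complex.exp_add, Complex.exp_pi_mul_I, ← Complex.ofReal_exp]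
    rw [show ((Real.exp r : ℝ):ℂ) * (-1) = ((-Real.exp r : ℝ):ℂ) by push_cast; ring]
    exact hHreal _
  have hrayNegπ : ∀ r : ℝ,
      ‖H (Complex.exp (((r:ℝ):ℂ) + ((-Real.pi:ℝ):ℂ) * Complex.I))‖ ≤ D := by
    intro r
    rw [show ((-Real.pi:ℝ):ℂ) * Complex.I = -(((Real.pi:ℝ):ℂ) * Complex.I) by push_cast; ring]
    rw [Complex.exp_add, Complex.exp_neg, Complex.exp_pi_mul_I, ← Complex.ofReal_exp]
    rw [show ((Real.exp r : ℝ):ℂ) * (-1)⁻¹ = ((-Real.exp r : ℝ):ℂ) by push_cast; ring]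
    exact hHreal _
  have hcos38 : Real.cos (2 * (3*Real.pi/8)) ≤ -(1/2) := by
    rw [show 2*(3*Real.pi/8) = Real.pi - Real.pi/4 by ring, Real.cos_pi_sub,
      Real.cos_pi_div_four]
    nlinarith [Real.sq_sqrt (by norm_num : (0:ℝ) ≤ 2), Real.sqrt_nonneg 2]
  have hcos58 : Real.cos (2 * (5*Real.pi/8)) ≤ -(1/2) := by
    rw [show 2*(5*Real.pi/8) = Real.pi - (-(Real.pi/4)) by ring, Real.cos_pi_sub,
      Real.cos_neg, Real.cos_pi_div_four]
    nlinarith [Real.sq_sqrt (by norm_num : (0:ℝ) ≤ 2), Real.sqrt_nonneg 2]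
  have hcosNeg38 : Real.cos (2 * (-(3*Real.pi/8))) ≤ -(1/2) := by
    rw [show 2*(-(3*Real.pi/8)) = -(2*(3*Real.pi/8)) by ring, Real.cos_neg]
    exact hcos38
  have hcosNeg58 : Real.cos (2 * (-(5*Real.pi/8))) ≤ -(1/2) := by
    rw [show 2*(-(5*Real.pi/8)) = -(2*(5*Real.pi/8)) by ring, Real.cos_neg]
    exact hcos58
  have hcover : ∀ z : ℂ, ‖H z‖ ≤ D := by
    intro z
    rcases eq_or_ne z 0 with rfl | hz0
    · have hH0 : H 0 = G 0 := by
        rw [hHdef]; simp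
      rw [hH0, show (0:ℂ) = ((0:ℝ):ℂ) by norm_num]
      have h2 : ‖G ((0:ℝ):ℂ)‖ = |g 0| := by
        rw [hGreal 0, Complex.norm_real, Real.norm_eq_abs]
      rw [h2]
      calc |g 0| ≤ D * Real.exp (-12 * (0:ℝ)^2) := gdecay 0
        _ = D := by norm_num
    · set θ := Complex.arg z with hθdef
      have hθ1 : -Real.pi < θ := Complex.neg_pi_lt_arg z
      have hθ2 : θ ≤ Real.pi := Complex.arg_le_pi z
      have hexplog : Complex.exp (Complex.log z) = z := Complex.exp_log hz0
      have him : (Complex.log z).im = θ := Complex.log_im z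
      have happ : ∀ A B : ℝ, B - A = 3*Real.pi/8 →
          (∀ r:ℝ, ‖H (Complex.exp (((r:ℝ):ℂ) + ((A:ℝ):ℂ)*Complex.I))‖ ≤ D) →
          (∀ r:ℝ, ‖H (Complex.exp (((r:ℝ):ℂ) + ((B:ℝ):ℂ)*Complex.I))‖ ≤ D) →
          A ≤ θ → θ ≤ B → ‖H z‖ ≤ D := by
        intro A B hab hA hB h1 h2
        have := GS_sector H hHdiff D D hD0.le hD0.le A B hab hHgrow hA hB
          (Complex.log z) (him ▸ h1) (him ▸ h2)
        rwa [hexplog] at this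
      have hmidcase : ∀ habs : 3*Real.pi/8 < |θ| → |θ| < 5*Real.pi/8 → True, True := fun _ => trivial
      rcases le_or_gt 0 θ with hpos | hneg
      · rcases le_or_gt θ (3*Real.pi/8) with hcase | hcase
        · exact happ 0 (3*Real.pi/8) (by ring) hray0 (hHray (3*Real.pi/8) hcos38) hpos hcase
        · rcases lt_or_ge θ (5*Real.pi/8) with hmid | hbig
          · apply hHkey
            rw [GS_re_sq z]
            have hcos := GS_cos_mid (θ := θ)
              (by rw [_root_.abs_of_nonneg hpos]; exact hcase)
              (by rw [_root_.abs_of_nonneg hpos]; exact hmid)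
            calc ‖z‖^2 * Real.cos (2*θ)
                ≤ ‖z‖^2 * (-(1/2)) :=
                  mul_le_mul_of_nonneg_left hcos (by positivity)
              _ = -(1/2) * ‖z‖^2 := by ring
          · exact happ (5*Real.pi/8) Real.pi (by ring)
              (hHray (5*Real.pi/8) hcos58) hrayπ hbig hθ2
      · rcases le_or_gt (-(3*Real.pi/8)) θ with hcase | hcase
        · exact happ (-(3*Real.pi/8)) 0 (by ring)
            (hHray (-(3*Real.pi/8)) hcosNeg38) hray0 hcase hneg.le
        · rcases lt_or_ge (-(5*Real.pi/8)) θ with hmid | hsmall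
          · apply hHkey
            rw [GS_re_sq z]
            have hcos := GS_cos_mid (θ := θ)
              (by rw [_root_.abs_of_neg hneg]; linarith)
              (by rw [_root_.abs_of_neg hneg]; linarith)
            calc ‖z‖^2 * Real.cos (2*θ)
                ≤ ‖z‖^2 * (-(1/2)) :=
                  mul_le_mul_of_nonneg_left hcos (by positivity)
              _ = -(1/2) * ‖z‖^2 := by ring
          · refine happ (-Real.pi) (-(5*Real.pi/8)) (by ring) hrayNegπ
              (hHray (-(5*Real.pi/8)) hcosNeg58) hθ1.le hsmall
  have hbdd : Bornology.IsBounded (Set.range H) := by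
    apply isBounded_iff_forall_norm_le.2 ⟨D, ?_⟩
    rintro x ⟨z, rfl⟩
    exact hcover z
  have hconst : ∀ z, H z = H 0 := fun z => hHdiff.apply_eq_apply_of_bounded hbdd z 0
  have hG0eq : ∀ t : ℝ, ((g t:ℝ):ℂ) * Complex.exp ((((t:ℝ):ℂ))^2) = G 0 := by
    intro t
    have h1 := hconst ((t:ℝ):ℂ)
    have hH0 : H 0 = G 0 := by rw [hHdef]; simp
    rw [hH0] at h1
    rw [hHdef] at h1
    simp only [] at h1
    rw [hGreal t] at h1
    exact h1
  have hG0norm : ∀ t : ℝ, ‖G 0‖ ≤ D * Real.exp (-11 * t^2) := by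
    intro t
    rw [← hG0eq t]
    rw [norm_mul, Complex.norm_real, Real.norm_eq_abs, Complex.norm_exp]
    have h1 : ((((t:ℝ):ℂ))^2).re = t^2 := by rw [← Complex.ofReal_pow, Complex.ofReal_re]
    rw [h1]
    calc |g t| * Real.exp (t^2)
        ≤ (D * Real.exp (-12*t^2)) * Real.exp (t^2) :=
          mul_le_mul_of_nonneg_right (gdecay t) (Real.exp_pos _).le
      _ = D * Real.exp (-11 * t^2) := by
          rw [mul_assoc, ← Real.exp_add]
          congr 1
          ring
  have hG00 : G 0 = 0 := by
    have htend : Tendsto (fun t : ℝ => D * Real.exp (-11 * t^2)) atTop (nhds 0) := by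
      have h1 : Tendsto (fun t:ℝ => 11 * t^2) atTop atTop :=
        (tendsto_pow_atTop two_ne_zero).const_mul_atTop (by norm_num)
      have h2 : Tendsto (fun t:ℝ => Real.exp (-(11 * t^2))) atTop (nhds 0) :=
        Real.tendsto_exp_neg_atTop_nhds_zero.comp h1
      have h3 := h2.const_mul D
      rw [mul_zero] at h3
      simpa [neg_mul] using h3
    exact norm_le_zero_iff.1 (ge_of_tendsto' htend hG0norm)
  intro t
  have h1 := hG0eq t
  rw [hG00] at h1
  rcases mul_eq_zero.1 h1 with h | h
  · exact_mod_cast h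
  · exact absurd h (Complex.exp_ne_zero _)
/-! ### The core one-dimensional rigidity lemma -/

open Complex in
private lemma GS_core (g : ℝ → ℝ) (hg : ContDiff ℝ (⊤ : ℕ∞) g) (C R : ℝ)
    (hC : 1 ≤ C) (hR : 1 ≤ R)
    (H1 : ∀ (n : ℕ) (t : ℝ), |iteratedDeriv n g t| ≤ C * max R (Real.sqrt n / 10) ^ n)
    (H2 : ∀ (m : ℕ) (t : ℝ), 2 * R ≤ |t| →
      |t| ^ m * |g t| ≤ C * max R (Real.sqrt m / 10) ^ m) :
    ∀ t : ℝ, g t = 0 := by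
  have hC0 : (0:ℝ) ≤ C := by linarith
  have hπ := Real.pi_pos
  set D : ℝ := 4 * C * Real.exp (100 * R ^ 2) with hD
  have hD0 : 0 < D := by positivity
  -- Decay of g on the real line
  have gdecay : ∀ t : ℝ, |g t| ≤ D * Real.exp (-12 * t ^ 2) := by
    intro t
    rcases le_or_gt (|t|) (2 * R) with hcase | hcase
    · have h0 : |g t| ≤ C := by simpa using H1 0 t
      have hnn : (0:ℝ) ≤ 100 * R ^ 2 + -12 * t ^ 2 := by
        nlinarith [_root_.sq_abs t, abs_nonneg t]
      have h2 : C ≤ D * Real.exp (-12 * t ^ 2) := by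
        rw [hD, mul_assoc, mul_assoc, ← Real.exp_add]
        nlinarith [Real.one_le_exp hnn, Real.exp_pos (100 * R ^ 2 + -12 * t ^ 2)]
      exact h0.trans h2
    · set m : ℕ := ⌈36 * t ^ 2⌉₊ with hm
      have ht1 : (1:ℝ) ≤ |t| := by linarith
      have ht0 : (0:ℝ) < |t| := by linarith
      have ht2 : (1:ℝ) ≤ t ^ 2 := by nlinarith [_root_.sq_abs t]
      have hm1 : 36 * t ^ 2 ≤ m := Nat.le_ceil _
      have hm2 : (m:ℝ) ≤ 37 * t ^ 2 := by
        have := Nat.ceil_lt_add_one (by positivity : (0:ℝ) ≤ 36 * t ^ 2)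
        nlinarith
      have hsm : Real.sqrt m ≤ 7 * |t| := by
        rw [show (7:ℝ) * |t| = Real.sqrt ((7 * |t|)^2) by
          rw [Real.sqrt_sq (by positivity)]]
        apply Real.sqrt_le_sqrt
        nlinarith [_root_.sq_abs t]
      have hsm2 : 6 * |t| ≤ Real.sqrt m := by
        rw [show (6:ℝ) * |t| = Real.sqrt ((6 * |t|)^2) by
          rw [Real.sqrt_sq (by positivity)]]
        apply Real.sqrt_le_sqrt
        nlinarith [_root_.sq_abs t]
      have hmaxeq : max R (Real.sqrt m / 10) = Real.sqrt m / 10 := by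
        apply max_eq_right
        nlinarith
      have h3 := H2 m t hcase.le
      rw [hmaxeq] at h3
      have h4 : |g t| ≤ C * (Real.sqrt m / (10 * |t|)) ^ m := by
        have hden : (0:ℝ) < |t| ^ m := by positivity
        calc |g t| = |t| ^ m * |g t| / |t| ^ m := by field_simp
          _ ≤ C * (Real.sqrt m / 10) ^ m / |t| ^ m := by gcongr
          _ = C * (Real.sqrt m / (10 * |t|)) ^ m := by
              rw [mul_div_assoc, div_pow, div_pow, mul_pow, div_div]
      have h5 : Real.sqrt m / (10 * |t|) ≤ 7/10 := by
        rw [div_le_div_iff₀ (by positivity) (by norm_num)]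
        nlinarith
      have h6 : (Real.sqrt m / (10 * |t|)) ^ m ≤ (7/10 : ℝ) ^ m :=
        pow_le_pow_left₀ (by positivity) h5 m
      have h7 : ((7:ℝ)/10) ^ m ≤ Real.exp (-12 * t ^ 2) := by
        have hstep : (7/10 : ℝ) ≤ Real.exp (-(1/3)) := by
          have h8 : (7/10:ℝ) * Real.exp (1/3) ≤ 1 := by nlinarith [GS_exp_third, Real.exp_pos (1/3:ℝ)]
          have h9 := mul_le_mul_of_nonneg_right h8
            (inv_nonneg.2 (Real.exp_pos (1/3:ℝ)).le)
          rw [mul_assoc, mul_inv_cancel₀ (Real.exp_pos _).ne', mul_one, one_mul] at h9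
          rw [Real.exp_neg]
          exact h9
        calc ((7:ℝ)/10) ^ m ≤ Real.exp (-(1/3)) ^ m :=
              pow_le_pow_left₀ (by norm_num) hstep m
          _ = Real.exp (-(1/3) * m) := by rw [← Real.exp_nat_mul]; ring_nf
          _ ≤ Real.exp (-12 * t ^ 2) := by
              apply Real.exp_le_exp.2
              nlinarith
      calc |g t| ≤ C * (Real.sqrt m / (10 * |t|)) ^ m := h4
        _ ≤ C * Real.exp (-12 * t ^ 2) :=
            mul_le_mul_of_nonneg_left (h6.trans h7) hC0
        _ ≤ D * Real.exp (-12 * t ^ 2) := by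
            apply mul_le_mul_of_nonneg_right _ (Real.exp_pos _).le
            rw [hD]
            nlinarith [Real.one_le_exp (by positivity : (0:ℝ) ≤ 100 * R ^ 2)]
  exact GS_core_main g hg C R hC0 hR H1 D hD0 (le_refl _) gdecay

/-! ### Bounds on the Young conjugate and the weights -/

private lemma GS_youngConj_le (ω : ℝ → ℝ) (hnn : ∀ t, 0 ≤ t → 0 ≤ ω t)
    {c R₀ : ℝ} (hc : 0 < c) (hR₀ : 1 ≤ R₀)
    (hlow : ∀ r : ℝ, R₀ ≤ r → c * r ^ 2 ≤ ω r) {s : ℝ} (hs : 0 ≤ s) :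
    youngConj ω s ≤ s * Real.log (max R₀ (Real.sqrt (s / (2*c)))) := by
  have hR₀0 : (0:ℝ) < R₀ := by linarith
  have hmaxpos : (0:ℝ) < max R₀ (Real.sqrt (s / (2*c))) := lt_of_lt_of_le hR₀0 (le_max_left _ _)
  have hlogmax : 0 ≤ Real.log (max R₀ (Real.sqrt (s / (2*c)))) :=
    Real.log_nonneg (le_trans hR₀ (le_max_left _ _))
  apply Real.sSup_le _ (by positivity)
  rintro y ⟨t, ht, rfl⟩
  rcases le_or_gt (Real.exp t) R₀ with hcase | hcase
  · have h1 : 0 ≤ ω (Real.exp t) := hnn _ (Real.exp_pos t).le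
    have h2 : t ≤ Real.log R₀ := by
      rw [← Real.log_exp t]
      exact Real.log_le_log (Real.exp_pos t) hcase
    calc s * t - ω (Real.exp t) ≤ s * t := by linarith
      _ ≤ s * Real.log R₀ := mul_le_mul_of_nonneg_left h2 hs
      _ ≤ s * Real.log (max R₀ (Real.sqrt (s / (2*c)))) := by
          apply mul_le_mul_of_nonneg_left _ hs
          exact Real.log_le_log hR₀0 (le_max_left _ _)
  · have h1 : c * (Real.exp t) ^ 2 ≤ ω (Real.exp t) := hlow _ hcase.le
    rcases eq_or_lt_of_le hs with rfl | hspos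
    · simp only [zero_mul, zero_sub]
      have h2 := hnn _ (Real.exp_pos t).le
      linarith
    · -- s > 0
      have hsc : 0 < s / (2*c) := by positivity
      have hkey : s * t - c * (Real.exp t) ^ 2 ≤ s * Real.log (Real.sqrt (s / (2*c))) := by
        have hexp2 : (Real.exp t) ^ 2 = Real.exp (2*t) := by
          rw [← Real.exp_nat_mul]; norm_num
        have hlogid : Real.exp (2*t - Real.log (s/(2*c))) * (s/(2*c)) = Real.exp (2*t) / 1 *
            1 := by
          rw [Real.exp_sub, Real.exp_log hsc]
          field_simp
        have h3 : (s/2) * (1 + (2*t - Real.log (s/(2*c)))) ≤ c * Real.exp (2*t) := by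
          have h4 := Real.add_one_le_exp (2*t - Real.log (s/(2*c)))
          have h5 : c * Real.exp (2*t) = (s/2) * Real.exp (2*t - Real.log (s/(2*c))) := by
            rw [Real.exp_sub, Real.exp_log hsc]
            field_simp
          rw [h5]
          have : 0 < s/2 := by linarith
          nlinarith
        rw [Real.log_sqrt hsc.le, hexp2]
        nlinarith
      have h6 : Real.log (Real.sqrt (s / (2*c))) ≤
          Real.log (max R₀ (Real.sqrt (s / (2*c)))) :=
        Real.log_le_log (Real.sqrt_pos.2 hsc) (le_max_right _ _)
      calc s * t - ω (Real.exp t) ≤ s * t - c * (Real.exp t)^2 := by linarith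
        _ ≤ s * Real.log (Real.sqrt (s / (2*c))) := hkey
        _ ≤ s * Real.log (max R₀ (Real.sqrt (s / (2*c)))) :=
            mul_le_mul_of_nonneg_left h6 hs

private lemma GS_wWeight_le (ω : ℝ → ℝ) (hnn : ∀ t, 0 ≤ t → 0 ≤ ω t)
    {c R₀ l : ℝ} (hc : 0 < c) (hR₀ : 1 ≤ R₀) (hl : 0 < l)
    (hlow : ∀ r : ℝ, R₀ ≤ r → c * r ^ 2 ≤ ω r)
    (hε : Real.sqrt (l / (2*c)) ≤ 1/20) (k : ℕ) :
    wWeight ω l k ≤ max R₀ (Real.sqrt k / 20) ^ k := by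
  have hs : (0:ℝ) ≤ l * k := by positivity
  have h1 := GS_youngConj_le ω hnn hc hR₀ hlow hs
  have hsqrtk : Real.sqrt (l * k / (2*c)) ≤ Real.sqrt k / 20 := by
    rw [show l * (k:ℝ) / (2*c) = (l/(2*c)) * k by ring,
      Real.sqrt_mul (by positivity) (k:ℝ)]
    calc Real.sqrt (l/(2*c)) * Real.sqrt k ≤ (1/20) * Real.sqrt k :=
        mul_le_mul_of_nonneg_right hε (Real.sqrt_nonneg _)
      _ = Real.sqrt k / 20 := by ring
  have hmono : max R₀ (Real.sqrt (l * k / (2*c))) ≤ max R₀ (Real.sqrt k / 20) :=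
    max_le_max (le_refl _) hsqrtk
  have hmaxpos : (0:ℝ) < max R₀ (Real.sqrt (l * k / (2*c))) :=
    lt_of_lt_of_le (by linarith) (le_max_left _ _)
  rw [wWeight]
  calc Real.exp (1 / l * youngConj ω (l * k))
      ≤ Real.exp (1 / l * (l * k * Real.log (max R₀ (Real.sqrt (l * k / (2*c)))))) := by
        apply Real.exp_le_exp.2
        apply mul_le_mul_of_nonneg_left h1 (by positivity)
    _ = Real.exp (k * Real.log (max R₀ (Real.sqrt (l * k / (2*c))))) := by
        congr 1
        field_simp
    _ = max R₀ (Real.sqrt (l * k / (2*c))) ^ k := by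
        rw [Real.exp_nat_mul, Real.exp_log hmaxpos]
    _ ≤ max R₀ (Real.sqrt k / 20) ^ k :=
        pow_le_pow_left₀ hmaxpos.le hmono k

/-! ### Multi-index lemmas -/

private lemma GS_mderiv_single {d : ℕ} (i : Fin d) (n : ℕ) (f : (Fin d → ℝ) → ℝ) :
    mderiv (Pi.single i n) f = (pderivOp i)^[n] f := by
  have key : ∀ l : List (Fin d), l.Nodup →
      List.foldr (fun j g => (pderivOp j)^[(Pi.single i n : Fin d → ℕ) j] g) f l
        = if i ∈ l then (pderivOp i)^[n] f else f := by
    intro l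
    induction l with
    | nil => simp
    | cons j l ih =>
      intro hnd
      rw [List.foldr_cons, ih hnd.of_cons]
      rcases eq_or_ne j i with rfl | hne
      · have hni : j ∉ l := (List.nodup_cons.1 hnd).1
        rw [if_neg hni, if_pos (List.mem_cons_self (a := j) (l := l)), Pi.single_eq_same]
      · rw [show (Pi.single i n : Fin d → ℕ) j = 0 from Pi.single_eq_of_ne (M := fun _ => ℕ) hne n]
        simp only [Function.iterate_zero, id_eq]
        by_cases hmem : i ∈ l
        · rw [if_pos hmem, if_pos (List.mem_cons_of_mem j hmem)]
        · rw [if_neg hmem, if_neg (by simp [hne.symm, hmem])]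
  rw [mderiv, key _ (List.nodup_finRange d), if_pos (List.mem_finRange i)]

private lemma GS_msize_single {d : ℕ} (i : Fin d) (n : ℕ) :
    msize (Pi.single i n) = n := by
  rw [msize, Finset.sum_pi_single']
  simp

private lemma GS_mpow_single {d : ℕ} (i : Fin d) (n : ℕ) (x : Fin d → ℝ) :
    mpow x (Pi.single i n) = x i ^ n := by
  rw [mpow]
  rw [Finset.prod_eq_single i (fun j _ hj => by rw [Pi.single_eq_of_ne hj, pow_zero])
    (fun h => absurd (Finset.mem_univ i) h)]
  rw [Pi.single_eq_same]

private lemma GS_pderiv_smooth {d : ℕ} (i : Fin d) (f : (Fin d → ℝ) → ℝ)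
    (hf : ContDiff ℝ (⊤ : ℕ∞) f) : ContDiff ℝ (⊤ : ℕ∞) (pderivOp i f) := by
  have heq : pderivOp i f = fun x =>
      (ContinuousLinearMap.apply ℝ ℝ ((Pi.single i 1 : Fin d → ℝ))) (fderiv ℝ f x) := rfl
  rw [heq]
  have h1 : ContDiff ℝ (⊤ : ℕ∞) (fderiv ℝ f) := hf.fderiv_right (by exact_mod_cast le_top)
  exact (ContinuousLinearMap.apply ℝ ℝ _).contDiff.comp h1

private lemma GS_iter_smooth {d : ℕ} (i : Fin d) (f : (Fin d → ℝ) → ℝ)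
    (hf : ContDiff ℝ (⊤ : ℕ∞) f) (n : ℕ) : ContDiff ℝ (⊤ : ℕ∞) ((pderivOp i)^[n] f) := by
  induction n with
  | zero => exact hf
  | succ n ih =>
    rw [Function.iterate_succ_apply']
    exact GS_pderiv_smooth i _ ih

private lemma GS_slice_deriv {d : ℕ} (i : Fin d) (f : (Fin d → ℝ) → ℝ)
    (hf : ContDiff ℝ (⊤ : ℕ∞) f) (x₀ : Fin d → ℝ) (n : ℕ) (t : ℝ) :
    iteratedDeriv n (fun s : ℝ => f (x₀ + s • (Pi.single i (1:ℝ) : Fin d → ℝ))) t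
      = ((pderivOp i)^[n] f) (x₀ + t • (Pi.single i (1:ℝ) : Fin d → ℝ)) := by
  induction n generalizing t with
  | zero => simp
  | succ n ih =>
    rw [iteratedDeriv_succ]
    have hfn := GS_iter_smooth i f hf n
    have hfuneq : iteratedDeriv n (fun s : ℝ => f (x₀ + s • (Pi.single i (1:ℝ) : Fin d → ℝ)))
        = fun s : ℝ => ((pderivOp i)^[n] f) (x₀ + s • (Pi.single i (1:ℝ) : Fin d → ℝ)) :=
      funext ih
    rw [hfuneq]
    have hcurve : HasDerivAt (fun s : ℝ => x₀ + s • (Pi.single i (1:ℝ) : Fin d → ℝ))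
        (Pi.single i (1:ℝ) : Fin d → ℝ) t := by
      simpa using ((hasDerivAt_id t).smul_const (Pi.single i (1:ℝ) : Fin d → ℝ)).const_add x₀
    have hdiff : DifferentiableAt ℝ ((pderivOp i)^[n] f)
        (x₀ + t • (Pi.single i (1:ℝ) : Fin d → ℝ)) :=
      (hfn.differentiable (by simp)).differentiableAt
    have hcomp : HasDerivAt
        (fun s : ℝ => ((pderivOp i)^[n] f) (x₀ + s • (Pi.single i (1:ℝ) : Fin d → ℝ)))
        ((fderiv ℝ ((pderivOp i)^[n] f)
          (x₀ + t • (Pi.single i (1:ℝ) : Fin d → ℝ))) (Pi.single i (1:ℝ) : Fin d → ℝ)) t := by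
      exact hdiff.hasFDerivAt.comp_hasDerivAt t hcurve
    rw [hcomp.deriv]
    rw [Function.iterate_succ_apply']
    rfl

private lemma GS_mderiv_zero_fun {d : ℕ} (β : Fin d → ℕ) :
    mderiv β (0 : (Fin d → ℝ) → ℝ) = 0 := by
  have hp : ∀ j : Fin d, pderivOp j (0 : (Fin d → ℝ) → ℝ) = 0 := by
    intro j
    funext x
    show fderiv ℝ (0 : (Fin d → ℝ) → ℝ) x (Pi.single j 1) = 0
    rw [show (0 : (Fin d → ℝ) → ℝ) = fun _ => (0:ℝ) from rfl, fderiv_fun_const]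
    simp
  have key : ∀ l : List (Fin d),
      List.foldr (fun j g => (pderivOp j)^[β j] g) (0 : (Fin d → ℝ) → ℝ) l = 0 := by
    intro l
    induction l with
    | nil => rfl
    | cons j l ih =>
      rw [List.foldr_cons, ih]
      exact Function.iterate_fixed (hp j) (β j)
  exact key _

/-! ### The main reduction -/

private lemma GS_main_red {d : ℕ} (ω : ℝ → ℝ) (hnn : ∀ t, 0 ≤ t → 0 ≤ ω t)
    (i : Fin d) (f : (Fin d → ℝ) → ℝ) (hf : ContDiff ℝ (⊤ : ℕ∞) f)
    {l C c R₀ : ℝ} (hl : 0 < l) (hCpos : 0 < C) (hc : 0 < c) (hR₀ : 1 ≤ R₀)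
    (hlow : ∀ r : ℝ, R₀ ≤ r → c * r ^ 2 ≤ ω r)
    (hε : Real.sqrt (l / (2*c)) ≤ 1/20)
    (hbd : ∀ α β : Fin d → ℕ, ∀ x : Fin d → ℝ,
      |mpow x α * mderiv β f x| ≤ C * wWeight ω l (msize α + msize β))
    (x₀ : Fin d → ℝ) : f x₀ = 0 := by
  set g : ℝ → ℝ := fun t => f (x₀ + t • (Pi.single i (1:ℝ) : Fin d → ℝ)) with hg
  have hgsmooth : ContDiff ℝ (⊤ : ℕ∞) g := by
    apply hf.comp
    exact contDiff_const.add (contDiff_id.smul contDiff_const)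
  set C' : ℝ := max C 1 with hC'
  have hC'1 : 1 ≤ C' := le_max_right _ _
  have hCC' : C ≤ C' := le_max_left _ _
  set R : ℝ := 2*R₀ + 2*|x₀ i| + 2 with hR
  have hR1 : 1 ≤ R := by rw [hR]; nlinarith [abs_nonneg (x₀ i)]
  -- weight bound specialized
  have hW : ∀ k : ℕ, wWeight ω l k ≤ max R₀ (Real.sqrt k / 20) ^ k :=
    GS_wWeight_le ω hnn hc hR₀ hl hlow hε
  have hWnn : ∀ k : ℕ, (0:ℝ) ≤ max R₀ (Real.sqrt k / 20) :=
    fun k => le_trans (by linarith) (le_max_left _ _)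
  -- H1
  have H1 : ∀ (n : ℕ) (t : ℝ), |iteratedDeriv n g t| ≤ C' * max R (Real.sqrt n / 10) ^ n := by
    intro n t
    rw [hg]
    rw [GS_slice_deriv i f hf x₀ n t]
    have h1 := hbd (Pi.single i 0) (Pi.single i n)
      (x₀ + t • (Pi.single i (1:ℝ) : Fin d → ℝ))
    rw [GS_mpow_single, pow_zero, one_mul, GS_msize_single, GS_msize_single,
      GS_mderiv_single, zero_add] at h1
    have h2 : wWeight ω l n ≤ max R (Real.sqrt n / 10) ^ n := by
      refine (hW n).trans (pow_le_pow_left₀ (hWnn n) ?_ n)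
      apply max_le_max
      · rw [hR]; nlinarith [abs_nonneg (x₀ i)]
      · apply div_le_div_of_nonneg_left (Real.sqrt_nonneg n) (by norm_num) (by norm_num)
    calc |(pderivOp i)^[n] f (x₀ + t • (Pi.single i (1:ℝ) : Fin d → ℝ))|
          ≤ C * wWeight ω l n := h1
      _ ≤ C' * max R (Real.sqrt n / 10) ^ n := by
          apply mul_le_mul hCC' h2 (Real.exp_pos _).le (by linarith)
  -- H2
  have H2 : ∀ (m : ℕ) (t : ℝ), 2*R ≤ |t| →
      |t| ^ m * |g t| ≤ C' * max R (Real.sqrt m / 10) ^ m := by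
    intro m t ht
    have hxv : (x₀ + t • (Pi.single i (1:ℝ) : Fin d → ℝ)) i = x₀ i + t := by
      simp [Pi.single_eq_same]
    have habs : |t| ≤ 2 * |x₀ i + t| := by
      have h1 : |t| ≤ |x₀ i + t| + |x₀ i| := by
        have h0 := abs_sub (x₀ i + t) (x₀ i)
        simpa using h0
      have h2 : 4 * |x₀ i| ≤ |t| := by
        rw [hR] at ht
        nlinarith [abs_nonneg (x₀ i), hR₀]
      linarith
    have h1 := hbd (Pi.single i m) (Pi.single i 0)
      (x₀ + t • (Pi.single i (1:ℝ) : Fin d → ℝ))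
    rw [GS_mpow_single, GS_msize_single, GS_msize_single, GS_mderiv_single,
      Function.iterate_zero, id_eq, add_zero, hxv] at h1
    have hgt : |g t| = |f (x₀ + t • (Pi.single i (1:ℝ) : Fin d → ℝ))| := by rw [hg]
    have h3 : |t| ^ m * |g t| ≤ 2 ^ m * (|x₀ i + t| ^ m *
        |f (x₀ + t • (Pi.single i (1:ℝ) : Fin d → ℝ))|) := by
      rw [hgt, ← mul_assoc, ← mul_pow]
      exact mul_le_mul_of_nonneg_right (pow_le_pow_left₀ (abs_nonneg t) habs m)
        (abs_nonneg _)
    have h4 : |x₀ i + t| ^ m * |f (x₀ + t • (Pi.single i (1:ℝ) : Fin d → ℝ))|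
        ≤ C * wWeight ω l m := by
      calc |x₀ i + t| ^ m * |f (x₀ + t • (Pi.single i (1:ℝ) : Fin d → ℝ))|
            = |(x₀ i + t) ^ m * f (x₀ + t • (Pi.single i (1:ℝ) : Fin d → ℝ))| := by
            rw [abs_mul, abs_pow]
        _ ≤ C * wWeight ω l m := h1
    have h5 : (2:ℝ) ^ m * max R₀ (Real.sqrt m / 20) ^ m = max (2*R₀) (Real.sqrt m / 10) ^ m := by
      rw [← mul_pow]
      congr 1
      rw [mul_max_of_nonneg _ _ (by norm_num : (0:ℝ) ≤ 2)]
      congr 1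
      ring
    calc |t| ^ m * |g t| ≤ 2 ^ m * (C * wWeight ω l m) := h3.trans
          (mul_le_mul_of_nonneg_left h4 (by positivity))
      _ ≤ 2 ^ m * (C * max R₀ (Real.sqrt m / 20) ^ m) := by
          apply mul_le_mul_of_nonneg_left _ (by positivity)
          exact mul_le_mul_of_nonneg_left (hW m) hCpos.le
      _ = C * (2 ^ m * max R₀ (Real.sqrt m / 20) ^ m) := by ring
      _ = C * max (2*R₀) (Real.sqrt m / 10) ^ m := by rw [h5]
      _ ≤ C' * max R (Real.sqrt m / 10) ^ m := by
          apply mul_le_mul hCC' (pow_le_pow_left₀ ?_ ?_ m) (by positivity) (by linarith)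
          · exact le_trans (by positivity) (le_max_left _ _)
          · apply max_le_max _ (le_refl _)
            rw [hR]
            nlinarith [abs_nonneg (x₀ i)]
  have := GS_core g hgsmooth C' R hC'1 hR1 H1 H2 0
  rw [hg] at this
  simpa using this

private lemma GS_zero_mem (ω : ℝ → ℝ) {d : ℕ} :
    ∀ l : ℝ, 0 < l → ∃ C > 0, ∀ α β : Fin d → ℕ, ∀ x : Fin d → ℝ,
      |mpow x α * mderiv β (0 : (Fin d → ℝ) → ℝ) x| ≤ C * wWeight ω l (msize α + msize β) := by
  intro l _
  refine ⟨1, one_pos, fun α β x => ?_⟩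
  rw [GS_mderiv_zero_fun]
  simp only [Pi.zero_apply, mul_zero, abs_zero, one_mul]
  exact (Real.exp_pos _).le

end GSAux


/-- Remark `oscillatingconsequence`: for a general weight function `ω`,
if `t² = O(ω(t))` then `S_(ω)(ℝ^d) = {0}` for every dimension `d`, and if `t² = o(ω(t))`
then `S_{{ω}}(ℝ^d) = {0}` for every dimension `d`. -/
theorem triviality_of_gelfand_shilov_classes (ω : ℝ → ℝ) (hω : IsGenWeightFun ω) :
    (((fun t : ℝ => t ^ 2) =O[Filter.atTop] ω) →
      ∀ d : ℕ, 0 < d → SBeurlingW ω d = {0}) ∧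
    (((fun t : ℝ => t ^ 2) =o[Filter.atTop] ω) →
      ∀ d : ℕ, 0 < d → SRoumieuW ω d = {0}) := by
  constructor
  · intro hO d hd
    apply Set.eq_singleton_iff_unique_mem.mpr
    constructor
    · exact ⟨contDiff_const, fun l hl => GS_zero_mem ω l hl⟩
    · rintro f ⟨hsm, hB⟩
      obtain ⟨C₀, hC₀pos, hOw⟩ := hO.exists_pos
      rw [Asymptotics.isBigOWith_iff] at hOw
      obtain ⟨T, hT⟩ := Filter.eventually_atTop.mp hOw
      set R₀ := max T 1 with hR₀def
      have hR₀ : 1 ≤ R₀ := le_max_right _ _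
      set c := C₀⁻¹ with hcdef
      have hc : 0 < c := by positivity
      have hlow : ∀ r : ℝ, R₀ ≤ r → c * r ^ 2 ≤ ω r := by
        intro r hr
        have h1 := hT r (le_trans (le_max_left _ _) hr)
        have hr0 : (0:ℝ) ≤ r := le_trans (by linarith) hr
        rw [Real.norm_eq_abs, Real.norm_eq_abs, abs_of_nonneg (hω.nonneg r hr0),
          abs_of_nonneg (by positivity : (0:ℝ) ≤ r ^ 2)] at h1
        calc c * r ^ 2 ≤ c * (C₀ * ω r) := mul_le_mul_of_nonneg_left h1 hc.le
          _ = ω r := by rw [hcdef]; field_simp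
      set l := min 1 (c/200) with hldef
      have hl : 0 < l := lt_min one_pos (by positivity)
      have hε : Real.sqrt (l/(2*c)) ≤ 1/20 := by
        have h2 : l ≤ c/200 := min_le_right _ _
        have h1 : l/(2*c) ≤ 1/400 := by
          rw [div_le_div_iff₀ (by positivity) (by norm_num)]
          nlinarith
        calc Real.sqrt (l/(2*c)) ≤ Real.sqrt (1/400) := Real.sqrt_le_sqrt h1
          _ = 1/20 := by
            rw [show (1/400:ℝ) = (1/20)^2 by norm_num, Real.sqrt_sq (by norm_num)]
      obtain ⟨C, hCpos, hbd⟩ := hB l hl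
      funext x₀
      simp only [Pi.zero_apply]
      exact GS_main_red ω hω.nonneg ⟨0, hd⟩ f (hsm.of_le (by simp)) hl hCpos hc hR₀
        hlow hε hbd x₀
  · intro ho d hd
    apply Set.eq_singleton_iff_unique_mem.mpr
    constructor
    · exact ⟨contDiff_const, 1, one_pos, GS_zero_mem ω 1 one_pos⟩
    · rintro f ⟨hsm, l, hl, C, hCpos, hbd⟩
      set c := 400 * l with hcdef
      have hc : 0 < c := by positivity
      have hev := ho.def (show (0:ℝ) < (400*l)⁻¹ by positivity)
      obtain ⟨T, hT⟩ := Filter.eventually_atTop.mp hev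
      set R₀ := max T 1 with hR₀def
      have hR₀ : 1 ≤ R₀ := le_max_right _ _
      have hlow : ∀ r : ℝ, R₀ ≤ r → c * r ^ 2 ≤ ω r := by
        intro r hr
        have h1 := hT r (le_trans (le_max_left _ _) hr)
        have hr0 : (0:ℝ) ≤ r := le_trans (by linarith) hr
        rw [Real.norm_eq_abs, Real.norm_eq_abs, abs_of_nonneg (hω.nonneg r hr0),
          abs_of_nonneg (by positivity : (0:ℝ) ≤ r ^ 2)] at h1
        have h2 : (400*l) * r ^ 2 ≤ (400*l) * ((400*l)⁻¹ * ω r) :=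
          mul_le_mul_of_nonneg_left h1 (by positivity)
        rw [hcdef]
        calc (400*l) * r ^ 2 ≤ (400*l) * ((400*l)⁻¹ * ω r) := h2
          _ = ω r := by field_simp
      have hε : Real.sqrt (l/(2*c)) ≤ 1/20 := by
        have h1 : l/(2*c) = 1/800 := by
          rw [hcdef]
          field_simp
          ring
        rw [h1]
        calc Real.sqrt (1/800) ≤ Real.sqrt (1/400) := Real.sqrt_le_sqrt (by norm_num)
          _ = 1/20 := by
            rw [show (1/400:ℝ) = (1/20)^2 by norm_num, Real.sqrt_sq (by norm_num)]
      funext x₀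
      simp only [Pi.zero_apply]
      exact GS_main_red ω hω.nonneg ⟨0, hd⟩ f (hsm.of_le (by simp)) hl hCpos hc hR₀
        hlow hε hbd x₀
end
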